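/- arXiv:2504.17535 — 10 statements merged into one kernel-verified Lean document; each statement's English description precedes it below -/
import Mathlib

section
/- Let Ω be a finite set with |Ω| ≥ 5 and let G be a subgroup of Sym(Ω) whose natural action on Ω is primitive (i.e. the action of G on Ω is transitive and preserves no nontrivial block system; in Lean, MulAction.IsPreprimitive). If G contains a transposition (a b) for some distinct a, b ∈ Ω (so that this transposition fixes at least three points), then G is the full symmetric group Sym(Ω), i.e. G = ⊤. -/
/-- A group action is preprimitive if it is pretransitive and every block is trivial
(this matches Mathlib's `MulAction.IsPreprimitive`). -/
def IsPreprimitive (G X : Type*) [Group G] [MulAction G X] : Prop :=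
  MulAction.IsPretransitive G X ∧
    ∀ B : Set X, MulAction.IsBlock G B → MulAction.IsTrivialBlock B

theorem isPreprimitive_iff_mulAction_isPreprimitive {G X : Type*} [Group G] [MulAction G X] :
    IsPreprimitive G X ↔ MulAction.IsPreprimitive G X :=
  ⟨fun ⟨_, hblock⟩ => ⟨fun {B} => hblock B⟩,
    fun h => ⟨h.toIsPretransitive, fun _ => h.isTrivialBlock_of_isBlock⟩⟩

theorem primitive_with_transposition_eq_top_general
    {Ω : Type*} [Fintype Ω] [DecidableEq Ω]
    (G : Subgroup (Equiv.Perm Ω)) (hprim : IsPreprimitive G Ω)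
    (a b : Ω) (hab : a ≠ b) (hswap : Equiv.swap a b ∈ G) :
    G = ⊤ :=
  Equiv.Perm.subgroup_eq_top_of_isPreprimitive_of_isSwap_mem
    (isPreprimitive_iff_mulAction_isPreprimitive.mp hprim) _ ⟨a, b, hab, rfl⟩ hswap

/-- A primitive subgroup of the symmetric group on at least 5 points that contains a
transposition is the full symmetric group. -/
theorem primitive_with_transposition_eq_top
    {Ω : Type*} [Fintype Ω] [DecidableEq Ω] (hcard : 5 ≤ Fintype.card Ω)
    (G : Subgroup (Equiv.Perm Ω)) (hprim : IsPreprimitive G Ω)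
    (a b : Ω) (hab : a ≠ b) (hswap : Equiv.swap a b ∈ G) :
    G = ⊤ :=
  primitive_with_transposition_eq_top_general G hprim a b hab hswap
end

section
/- Let Ω be a finite set partitioned into two disjoint nonempty subsets Ω₁ and Ω₂. Let ρ₀,…,ρ_{r−1} ∈ Sym(Ω) be involutions satisfying the string property. Suppose there exist an index i ∈ {0,…,r−1} and points a ∈ Ω₁, b ∈ Ω₂ such that ρᵢ is exactly the transposition (a b), every ρⱼ with j < i fixes each point of Ω₂, and every ρⱼ with j > i fixes each point of Ω₁. If the subgroup G := ⟨ρ₀,…,ρ_{r−1}⟩ acts transitively on Ω, then G = Sym(Ω) (i.e. G = ⊤). -/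
/-!
A subgroup `G ≤ Sym(Ω)` containing `(a b)` contains `(a (g a))` for every `g ∈ G` as soon as
this holds for the generators, because `(a (g h a))` is a product of `(a (g a))` and the
`g`-conjugate of `(a (h a))`. Each generator `ρ j` fixes `a` or `b`, or is `(a b)` itself, so
`(a (ρ j a))` lies in `G`. By transitivity `G` then contains `(a x)` for every `x`, hence every
transposition.
-/

namespace Equiv.Perm

variable {α : Type*} [DecidableEq α]

theorem swap_apply_mem_of_swap_mem {G : Subgroup (Perm α)} {g : Perm α} {x y : α}
    (hg : g ∈ G) (h : swap x y ∈ G) : swap (g x) (g y) ∈ G := by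
  rw [swap_apply_apply]
  exact G.mul_mem (G.mul_mem hg h) (G.inv_mem hg)

theorem swap_apply_mem_of_apply_eq_self {G : Subgroup (Perm α)} {g : Perm α} {a b : α}
    (hab : swap a b ∈ G) (hg : g ∈ G) (hgb : g b = b) : swap a (g a) ∈ G := by
  have hconj := swap_apply_mem_of_swap_mem hg hab
  rw [hgb, swap_comm] at hconj
  exact SubmonoidClass.swap_mem_trans G hab hconj

theorem swap_apply_mem_closure {S : Set (Perm α)} {a : α}
    (hS : ∀ s ∈ S, swap a (s a) ∈ Subgroup.closure S) {g : Perm α}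
    (hg : g ∈ Subgroup.closure S) : swap a (g a) ∈ Subgroup.closure S := by
  induction hg using Subgroup.closure_induction with
  | mem s hs => exact hS s hs
  | one =>
    rw [one_apply, swap_self]
    exact Subgroup.one_mem _
  | mul g h hg _ hga hha =>
    exact SubmonoidClass.swap_mem_trans _ hga (swap_apply_mem_of_swap_mem hg hha)
  | inv g hg hga =>
    simpa [swap_comm] using swap_apply_mem_of_swap_mem (Subgroup.inv_mem _ hg) hga

theorem closure_eq_top_of_swap_apply_mem [Finite α] {S : Set (Perm α)} (a : α)
    (hS : ∀ s ∈ S, swap a (s a) ∈ Subgroup.closure S)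
    (htrans : ∀ x, ∃ g ∈ Subgroup.closure S, g a = x) : Subgroup.closure S = ⊤ := by
  have hswap : ∀ x, swap a x ∈ Subgroup.closure S := fun x => by
    obtain ⟨g, hg, rfl⟩ := htrans x
    exact swap_apply_mem_closure hS hg
  rw [eq_top_iff, ← closure_isSwap, Subgroup.closure_le]
  rintro _ ⟨x, y, -, rfl⟩
  exact SubmonoidClass.swap_mem_trans _ (swap_comm a x ▸ hswap x) (hswap y)

end Equiv.Perm

theorem perfect_split_transitive_eq_symm_general
    {Ω : Type*} [Fintype Ω] [DecidableEq Ω]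
    (Ω₁ Ω₂ : Set Ω)
    (r : ℕ) (ρ : Fin r → Equiv.Perm Ω)
    (i : Fin r) (a b : Ω) (ha : a ∈ Ω₁) (hb : b ∈ Ω₂)
    (hi : ρ i = Equiv.swap a b)
    (hbefore : ∀ j : Fin r, (j : ℕ) < (i : ℕ) → ∀ x ∈ Ω₂, ρ j x = x)
    (hafter : ∀ j : Fin r, (i : ℕ) < (j : ℕ) → ∀ x ∈ Ω₁, ρ j x = x)
    (htrans : ∀ x y : Ω, ∃ g ∈ Subgroup.closure (Set.range ρ), g x = y) :
    Subgroup.closure (Set.range ρ) = ⊤ := by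
  have hab : Equiv.swap a b ∈ Subgroup.closure (Set.range ρ) :=
    hi ▸ Subgroup.subset_closure ⟨i, rfl⟩
  refine Equiv.Perm.closure_eq_top_of_swap_apply_mem a ?_ (htrans a)
  rintro _ ⟨j, rfl⟩
  rcases lt_trichotomy (j : ℕ) i with hj | hj | hj
  · exact Equiv.Perm.swap_apply_mem_of_apply_eq_self hab (Subgroup.subset_closure ⟨j, rfl⟩)
      (hbefore j hj b hb)
  · rwa [Fin.ext hj, hi, Equiv.swap_apply_left]
  · rw [hafter j hj a ha, Equiv.swap_self]
    exact Subgroup.one_mem _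

/-- If a string group generated by involutions on a finite set `Ω` has a "perfect split"
`ρ i = (a b)` across a partition `Ω = Ω₁ ∪ Ω₂` (all earlier generators supported on `Ω₁`,
all later ones on `Ω₂`) and acts transitively, then it is the full symmetric group. -/
theorem perfect_split_transitive_eq_symm
    {Ω : Type*} [Fintype Ω] [DecidableEq Ω]
    (Ω₁ Ω₂ : Set Ω) (hdisj : Disjoint Ω₁ Ω₂) (hunion : Ω₁ ∪ Ω₂ = Set.univ)
    (hne₁ : Ω₁.Nonempty) (hne₂ : Ω₂.Nonempty)
    (r : ℕ) (ρ : Fin r → Equiv.Perm Ω)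
    (hinv : ∀ j : Fin r, orderOf (ρ j) = 2)
    (hstring : ∀ j k : Fin r, (j : ℕ) + 2 ≤ (k : ℕ) ∨ (k : ℕ) + 2 ≤ (j : ℕ) →
      (ρ j * ρ k) ^ 2 = 1)
    (i : Fin r) (a b : Ω) (ha : a ∈ Ω₁) (hb : b ∈ Ω₂)
    (hi : ρ i = Equiv.swap a b)
    (hbefore : ∀ j : Fin r, (j : ℕ) < (i : ℕ) → ∀ x ∈ Ω₂, ρ j x = x)
    (hafter : ∀ j : Fin r, (i : ℕ) < (j : ℕ) → ∀ x ∈ Ω₁, ρ j x = x)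
    (htrans : ∀ x y : Ω, ∃ g ∈ Subgroup.closure (Set.range ρ), g x = y) :
    Subgroup.closure (Set.range ρ) = ⊤ :=
  perfect_split_transitive_eq_symm_general Ω₁ Ω₂ r ρ i a b ha hb hi hbefore hafter htrans
end

section
/- Let Ω be a finite set partitioned into two disjoint subsets Ω₁ and Ω₂. Let ρ₀,…,ρ_{r−1} ∈ Sym(Ω) be involutions satisfying the string property. Suppose there exist an index i ∈ {0,…,r−1} and points a ∈ Ω₁, b ∈ Ω₂ such that ρᵢ is exactly the transposition (a b), every ρⱼ with j < i fixes each point of Ω₂, and every ρⱼ with j > i fixes each point of Ω₁. Let G := ⟨ρ₀,…,ρ_{r−1}⟩ and let C ⊆ Ω be the G-orbit of a. Then every permutation σ ∈ Sym(Ω) that fixes every point of Ω \ C belongs to G; in particular G induces the full symmetric group on C. -/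
/-!
Let `G = ⟨ρ₀, …, ρ_{r-1}⟩` and `S = {x | (a x) ∈ G}`. Since `(a b) ∈ G`, also `S = {x | (b x) ∈ G}`.
Every generator fixes `a`, fixes `b`, or equals `(a b)`, so it maps `S` into itself (conjugate
`(a x)` or `(b x)` by it); hence `S` contains the orbit `C` of `a`. Thus `G` contains every transposition of points
of `C`, and these generate all permutations supported on `C`.
-/

open Equiv Subgroup

namespace Equiv.Perm

variable {α : Type*} [DecidableEq α] {H : Subgroup (Perm α)}

theorem swap_apply_mem {g : Perm α} {x y : α} (hg : g ∈ H) (hxy : swap x y ∈ H) :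
    swap (g x) (g y) ∈ H := by
  rw [swap_apply_apply]
  exact mul_mem (mul_mem hg hxy) (inv_mem hg)

theorem swap_mem_iff_swap_mem {a b x : α} (hab : swap a b ∈ H) :
    swap a x ∈ H ↔ swap b x ∈ H :=
  ⟨SubmonoidClass.swap_mem_trans H (swap_comm a b ▸ hab),
    SubmonoidClass.swap_mem_trans H hab⟩

/-- As the group is finite, `closure R` is the submonoid generated by `R`, so no inverses of
generators need to be handled. -/
theorem swap_apply_mem_closure_s2 [Finite α] {R : Set (Perm α)} {a : α}
    (hR : ∀ r ∈ R, ∀ x, swap a x ∈ closure R → swap a (r x) ∈ closure R)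
    {g : Perm α} (hg : g ∈ closure R) : swap a (g a) ∈ closure R := by
  rw [← mem_toSubmonoid, closure_toSubmonoid_of_finite] at hg
  have hmaps : ∀ x, swap a x ∈ closure R → swap a (g x) ∈ closure R := by
    induction hg using Submonoid.closure_induction with
    | mem r hr => exact hR r hr
    | one => exact fun _ hx => hx
    | mul g h _ _ hgR hhR => exact fun x hx => hgR _ (hhR x hx)
  exact hmaps a (swap_self a ▸ one_mem _)

theorem mem_of_forall_swap_mem {s : Set α} (hs : s.Finite)
    (hH : ∀ x ∈ s, ∀ y ∈ s, swap x y ∈ H) {σ : Perm α} (hσ : ∀ x ∉ s, σ x = x) : σ ∈ H := by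
  set T := {τ | τ ∈ H ∧ τ.IsSwap}
  have hT : ∀ τ ∈ T, τ.IsSwap := fun _ hτ => hτ.2
  have hσs : ∀ x ∈ s, σ x ∈ s := fun x hx => by
    by_contra h
    rw [σ.injective (hσ _ h)] at h
    exact h hx
  have hswap : ∀ x, swap (σ x) x ∈ closure T := fun x => by
    by_cases hfix : σ x = x
    · rw [hfix, swap_self]
      exact one_mem _
    have hx : x ∈ s := by_contra fun h => hfix (hσ x h)
    exact subset_closure ⟨hH _ (hσs x hx) x hx, σ x, x, hfix, rfl⟩
  have hfin : (MulAction.fixedBy α σ)ᶜ.Finite :=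
    hs.subset fun x hx => by_contra fun h => hx (hσ x h)
  exact (closure_le H).2 (fun _ hτ => hτ.1)
    ((mem_closure_isSwap hT).2 ⟨hfin, fun x => (swap_mem_closure_isSwap hT).1 (hswap x)⟩)

end Equiv.Perm

open Equiv.Perm

theorem perfect_split_full_symmetric_on_orbit_general
    {Ω : Type*} [Fintype Ω] [DecidableEq Ω]
    (Ω₁ Ω₂ : Set Ω)
    (r : ℕ) (ρ : Fin r → Equiv.Perm Ω)
    (i : Fin r) (a b : Ω) (ha : a ∈ Ω₁) (hb : b ∈ Ω₂)
    (hi : ρ i = Equiv.swap a b)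
    (hbefore : ∀ j : Fin r, (j : ℕ) < (i : ℕ) → ∀ x ∈ Ω₂, ρ j x = x)
    (hafter : ∀ j : Fin r, (i : ℕ) < (j : ℕ) → ∀ x ∈ Ω₁, ρ j x = x)
    (C : Set Ω) (hC : C = {x : Ω | ∃ g ∈ Subgroup.closure (Set.range ρ), g a = x}) :
    ∀ σ : Equiv.Perm Ω, (∀ x : Ω, x ∉ C → σ x = x) → σ ∈ Subgroup.closure (Set.range ρ) := by
  set G := closure (Set.range ρ)
  have hρ : ∀ j, ρ j ∈ G := fun j => subset_closure ⟨j, rfl⟩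
  have hab : swap a b ∈ G := hi ▸ hρ i
  have hstep : ∀ j x, swap a x ∈ G → swap a (ρ j x) ∈ G := fun j x hx => by
    rcases lt_trichotomy (j : ℕ) i with hj | hj | hj
    · have := swap_apply_mem (hρ j) ((swap_mem_iff_swap_mem hab).1 hx)
      rwa [hbefore j hj b hb, ← swap_mem_iff_swap_mem hab] at this
    · have := swap_apply_mem hab ((swap_mem_iff_swap_mem hab).1 hx)
      rwa [swap_apply_right, ← hi, ← Fin.ext hj] at this
    · simpa only [hafter j hj a ha] using swap_apply_mem (hρ j) hx
  have horbit : ∀ x ∈ C, swap a x ∈ G := by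
    rw [hC]
    rintro _ ⟨g, hg, rfl⟩
    exact swap_apply_mem_closure_s2 (by rintro _ ⟨j, rfl⟩; exact hstep j) hg
  intro σ hσ
  exact mem_of_forall_swap_mem C.toFinite (fun x hx y hy =>
    SubmonoidClass.swap_mem_trans G (swap_comm a x ▸ horbit x hx) (horbit y hy)) hσ

/-- If a string group generated by involutions on a finite set `Ω` has a "perfect split"
`ρ i = (a b)` across a partition `Ω = Ω₁ ∪ Ω₂`, then the group contains every permutation
supported on the orbit `C` of `a`; in particular it induces the full symmetric group on `C`. -/
theorem perfect_split_full_symmetric_on_orbit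
    {Ω : Type*} [Fintype Ω] [DecidableEq Ω]
    (Ω₁ Ω₂ : Set Ω) (hdisj : Disjoint Ω₁ Ω₂) (hunion : Ω₁ ∪ Ω₂ = Set.univ)
    (r : ℕ) (ρ : Fin r → Equiv.Perm Ω)
    (hinv : ∀ j : Fin r, orderOf (ρ j) = 2)
    (hstring : ∀ j k : Fin r, (j : ℕ) + 2 ≤ (k : ℕ) ∨ (k : ℕ) + 2 ≤ (j : ℕ) →
      (ρ j * ρ k) ^ 2 = 1)
    (i : Fin r) (a b : Ω) (ha : a ∈ Ω₁) (hb : b ∈ Ω₂)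
    (hi : ρ i = Equiv.swap a b)
    (hbefore : ∀ j : Fin r, (j : ℕ) < (i : ℕ) → ∀ x ∈ Ω₂, ρ j x = x)
    (hafter : ∀ j : Fin r, (i : ℕ) < (j : ℕ) → ∀ x ∈ Ω₁, ρ j x = x)
    (C : Set Ω) (hC : C = {x : Ω | ∃ g ∈ Subgroup.closure (Set.range ρ), g a = x}) :
    ∀ σ : Equiv.Perm Ω, (∀ x : Ω, x ∉ C → σ x = x) → σ ∈ Subgroup.closure (Set.range ρ) :=
  perfect_split_full_symmetric_on_orbit_general Ω₁ Ω₂ r ρ i a b ha hb hi hbefore hafter C hC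
end

section
/- Let Ω be a finite set and let (ρ₀,…,ρ_{r−1}) be a string C-group representation in Sym(Ω) (the ρⱼ are involutions generating a subgroup, with the string property and intersection property) such that ρ₀ is exactly the transposition (A a) for some distinct A, a ∈ Ω, and ρⱼ(A) = A for every j with 1 ≤ j ≤ r−1. Form Ω' := Option Ω, regarding the new point none as a new vertex B; extend each ρⱼ to a permutation of Ω' fixing none (via Option.map / Equiv.optionCongr), and define ρ₋₁ := the transposition swapping none and some A. Then the list (ρ₋₁, ρ₀, …, ρ_{r−1}) of r+1 involutions in Sym(Ω') satisfies both the string property and the intersection property, i.e. it is a string C-group representation of the subgroup it generates. -/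
/-!
Write `τ = (none (some A))` and `ι : Sym(Ω) → Sym(Option Ω)` for extension by a fixed `none`.
Since `ρⱼ` fixes `A` for `j ≥ 1`, `τ` commutes with `ι ρⱼ`; this gives the string property.

Call `H ≤ Sym(Ω)` closed if `(A (k A)) ∈ H` for all `k ∈ H`; each subgroup generated by some
`ρⱼ` is closed, since every generator fixes `A` or is `(A a)`. For closed `H`, the identity
`τ (ι k) τ = ι (A (k A)) τ (ι k)` (when `k A ≠ A`) gives `⟨τ, ι H⟩ = ι H ∪ ι H τ ι H`, so the
stabiliser of `none` in `⟨τ, ι H⟩` is `ι H`, and an element sending `none` to `some b` forces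
`(A b) ∈ H`. Elements fixing `none` are thus handled by the intersection property of `ρ`, and an
element `g` with `g none = some b` is `ι (A b) τ` times one of those, where `ι (A b) τ` lies in
the subgroup for `I ∩ J`.
-/

open Equiv Subgroup

def StringProperty {G : Type*} [Monoid G] {n : ℕ} (ρ : Fin n → G) : Prop :=
  ∀ j k : Fin n, (j : ℕ) + 2 ≤ (k : ℕ) ∨ (k : ℕ) + 2 ≤ (j : ℕ) → (ρ j * ρ k) ^ 2 = 1

def IntersectionProperty {G ι : Type*} [Group G] (ρ : ι → G) : Prop :=
  ∀ I J : Set ι, closure (ρ '' I) ⊓ closure (ρ '' J) = closure (ρ '' (I ∩ J))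

namespace Fin

variable {β : Type*} {n : ℕ} (x : β) (f : Fin n → β) {K : Set (Fin (n + 1))}

lemma image_cons_of_zero_notMem (hK : 0 ∉ K) :
    (cons x f : Fin (n + 1) → β) '' K = f '' (succ ⁻¹' K) := by
  ext y
  constructor
  · rintro ⟨i, hi, rfl⟩
    cases i using Fin.cases with
    | zero => exact absurd hi hK
    | succ j => exact ⟨j, hi, rfl⟩
  · rintro ⟨j, hj, rfl⟩
    exact ⟨j.succ, hj, rfl⟩

lemma image_cons_of_zero_mem (hK : 0 ∈ K) :
    (cons x f : Fin (n + 1) → β) '' K = insert x (f '' (succ ⁻¹' K)) := by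
  ext y
  constructor
  · rintro ⟨i, hi, rfl⟩
    cases i using Fin.cases with
    | zero => exact Or.inl rfl
    | succ j => exact Or.inr ⟨j, hi, rfl⟩
  · rintro (rfl | ⟨j, hj, rfl⟩)
    · exact ⟨0, hK, rfl⟩
    · exact ⟨j.succ, hj, rfl⟩

end Fin

namespace Equiv.Perm

variable {α : Type*}

def optionCongrHom : Perm α →* Perm (Option α) where
  toFun := optionCongr
  map_one' := optionCongr_one
  map_mul' σ τ := by ext (_ | _) <;> rfl

@[simp] lemma optionCongrHom_apply (σ : Perm α) : optionCongrHom σ = σ.optionCongr := rfl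

lemma optionCongrHom_injective :
    Function.Injective (optionCongrHom : Perm α →* Perm (Option α)) :=
  optionCongr_injective

variable [DecidableEq α]

lemma swap_self_mem {H : Subgroup (Perm α)} {x : α} : swap x x ∈ H := by
  rw [swap_self]
  exact H.one_mem

lemma swap_mem_trans {H : Subgroup (Perm α)} {x y z : α} (hxy : swap x y ∈ H)
    (hyz : swap y z ∈ H) : swap x z ∈ H := by
  rcases eq_or_ne x y with rfl | hxy'
  · exact hyz
  rcases eq_or_ne x z with rfl | hxz
  · exact swap_self_mem
  rw [← swap_comm z, ← swap_mul_swap_mul_swap hxy' hxz]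
  exact mul_mem (mul_mem hyz hxy) hyz

lemma swap_apply_mem_closure_s3 {S : Set (Perm α)} {A : α}
    (hS : ∀ σ ∈ S, swap A (σ A) ∈ closure S) {k : Perm α} (hk : k ∈ closure S) :
    swap A (k A) ∈ closure S := by
  induction hk using closure_induction with
  | mem σ hσ => exact hS σ hσ
  | one => exact swap_self_mem
  | mul g h hg _ ihg ihh =>
    refine swap_mem_trans ihg ?_
    rw [mul_apply, swap_apply_apply]
    exact mul_mem (mul_mem hg ihh) (inv_mem hg)
  | inv g hg ih =>
    have h : swap A (g⁻¹ A) = g⁻¹ * swap (g A) A * g⁻¹⁻¹ := by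
      rw [← swap_apply_apply]
      simp
    rw [h, swap_comm]
    exact mul_mem (mul_mem (inv_mem hg) ih) (inv_mem (inv_mem hg))

lemma commute_swap_none_optionCongrHom {A : α} {k : Perm α} (hk : k A = A) :
    Commute (swap none (some A)) (optionCongrHom k) := by
  rw [Commute, SemiconjBy, mul_swap_eq_swap_mul]
  simp [hk]

lemma swap_none_mul_optionCongrHom_mul_swap_none {A : α} {k : Perm α} (hk : k A ≠ A) :
    swap none (some A) * optionCongrHom k * swap none (some A) =
      optionCongrHom (swap A (k A)) * swap none (some A) * optionCongrHom k := by
  simp only [optionCongrHom_apply]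
  rw [mul_assoc, mul_swap_eq_swap_mul, ← mul_assoc, mul_swap_eq_swap_mul, optionCongr_swap]
  simp [swap_apply_of_ne_of_ne, hk]

def adjoinSwapNone (A : α) (H : Subgroup (Perm α)) : Subgroup (Perm (Option α)) :=
  closure (insert (swap none (some A)) (H.map optionCongrHom : Set (Perm (Option α))))

section AdjoinSwapNone

variable {A : α} {H : Subgroup (Perm α)} (hH : ∀ k ∈ H, swap A (k A) ∈ H)
include hH

lemma mem_map_or_exists_eq_mul_swap_none_mul {g : Perm (Option α)}
    (hg : g ∈ adjoinSwapNone A H) :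
    g ∈ H.map optionCongrHom ∨
      ∃ k ∈ H, ∃ m ∈ H.map optionCongrHom, g = optionCongrHom k * swap none (some A) * m := by
  set M := H.map optionCongrHom
  have step : ∀ x ∈ insert (swap none (some A)) (M : Set (Perm (Option α))), ∀ y,
      (y ∈ M ∨ ∃ k ∈ H, ∃ m ∈ M, y = optionCongrHom k * swap none (some A) * m) →
      (x * y ∈ M ∨ ∃ k ∈ H, ∃ m ∈ M, x * y = optionCongrHom k * swap none (some A) * m) := by
    rintro x (rfl | ⟨l, hl, rfl⟩) y (hy | ⟨k, hk, m, hm, rfl⟩)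
    · exact Or.inr ⟨1, one_mem H, y, hy, by simp⟩
    · by_cases hkA : k A = A
      · refine Or.inl ?_
        rw [← mul_assoc, ← mul_assoc, (commute_swap_none_optionCongrHom hkA).eq,
          mul_assoc _ _ (swap none (some A)), swap_mul_self, mul_one]
        exact mul_mem ⟨k, hk, rfl⟩ hm
      · refine Or.inr ⟨swap A (k A), hH k hk, optionCongrHom k * m,
          mul_mem ⟨k, hk, rfl⟩ hm, ?_⟩
        rw [← mul_assoc, ← mul_assoc, swap_none_mul_optionCongrHom_mul_swap_none hkA]
        simp only [mul_assoc]
    · exact Or.inl (mul_mem ⟨l, hl, rfl⟩ hy)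
    · exact Or.inr ⟨l * k, mul_mem hl hk, m, hm, by simp only [map_mul]; group⟩
  induction hg using closure_induction_left with
  | one => exact Or.inl (one_mem M)
  | mul_left x hx y _ ih => exact step x hx y ih
  | inv_mul_cancel x hx y _ ih =>
    refine step x⁻¹ ?_ y ih
    rcases hx with rfl | hx
    · exact Or.inl (swap_inv _ _)
    · exact Or.inr (inv_mem hx)

lemma mem_map_of_mem_adjoinSwapNone_of_apply_none {g : Perm (Option α)}
    (hg : g ∈ adjoinSwapNone A H) (hnone : g none = none) : g ∈ H.map optionCongrHom := by
  obtain hg | ⟨k, -, m, ⟨l, -, rfl⟩, rfl⟩ := mem_map_or_exists_eq_mul_swap_none_mul hH hg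
  · exact hg
  · simp at hnone

lemma swap_mem_of_mem_adjoinSwapNone_of_apply_none {g : Perm (Option α)} {b : α}
    (hg : g ∈ adjoinSwapNone A H) (hb : g none = some b) : swap A b ∈ H := by
  obtain ⟨l, -, rfl⟩ | ⟨k, hk, m, ⟨l, -, rfl⟩, rfl⟩ :=
    mem_map_or_exists_eq_mul_swap_none_mul hH hg
  · simp at hb
  · simp only [optionCongrHom_apply, mul_apply, optionCongr_apply, Option.map_none,
      swap_apply_left, Option.map_some, Option.some.injEq] at hb
    exact hb ▸ hH k hk

end AdjoinSwapNone

section ExtendBySwap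

variable {n : ℕ} (A : α) (ρ : Fin n → Perm α)

def extendBySwap : Fin (n + 1) → Perm (Option α) :=
  Fin.cons (swap none (some A)) fun j => optionCongrHom (ρ j)

lemma closure_extendBySwap_image_of_zero_notMem {K : Set (Fin (n + 1))} (hK : 0 ∉ K) :
    closure (extendBySwap A ρ '' K) =
      (closure (ρ '' (Fin.succ ⁻¹' K))).map optionCongrHom := by
  rw [extendBySwap, Fin.image_cons_of_zero_notMem _ _ hK, MonoidHom.map_closure,
    Set.image_image]

lemma closure_extendBySwap_image_of_zero_mem {K : Set (Fin (n + 1))} (hK : 0 ∈ K) :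
    closure (extendBySwap A ρ '' K) = adjoinSwapNone A (closure (ρ '' (Fin.succ ⁻¹' K))) := by
  rw [extendBySwap, adjoinSwapNone, Fin.image_cons_of_zero_mem _ _ hK, MonoidHom.map_closure,
    Set.insert_eq, Set.insert_eq, Subgroup.closure_union, Subgroup.closure_union,
    Subgroup.closure_eq, Set.image_image]

lemma map_closure_le_closure_extendBySwap_image (K : Set (Fin (n + 1))) :
    (closure (ρ '' (Fin.succ ⁻¹' K))).map optionCongrHom ≤
      closure (extendBySwap A ρ '' K) := by
  by_cases hK : 0 ∈ K
  · rw [closure_extendBySwap_image_of_zero_mem A ρ hK]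
    exact fun g hg => subset_closure (Set.mem_insert_of_mem _ hg)
  · rw [closure_extendBySwap_image_of_zero_notMem A ρ hK]

lemma stringProperty_extendBySwap (hρ : StringProperty ρ) (hinv : ∀ j, ρ j ^ 2 = 1)
    (hfix : ∀ j : Fin n, 1 ≤ (j : ℕ) → ρ j A = A) : StringProperty (extendBySwap A ρ) := by
  have hτ : swap none (some A) ^ 2 = 1 := by rw [sq, swap_mul_self]
  have hι : ∀ j, optionCongrHom (ρ j) ^ 2 = 1 := fun j => by rw [← map_pow, hinv, map_one]
  intro j k hjk
  cases j using Fin.cases <;> cases k using Fin.cases <;>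
    simp only [Fin.val_zero, Fin.val_succ] at hjk
  case zero.zero => omega
  case zero.succ k =>
    simp only [extendBySwap, Fin.cons_zero, Fin.cons_succ]
    rw [(commute_swap_none_optionCongrHom (hfix k (by omega))).mul_pow, hτ, hι, one_mul]
  case succ.zero j =>
    simp only [extendBySwap, Fin.cons_zero, Fin.cons_succ]
    rw [(commute_swap_none_optionCongrHom (hfix j (by omega))).symm.mul_pow, hτ, hι,
      one_mul]
  case succ.succ j k =>
    simp only [extendBySwap, Fin.cons_succ]
    rw [← map_mul, ← map_pow, hρ j k (by omega), map_one]

section IntersectionProperty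

variable {A ρ} (hA : ∀ j, ρ j A = A ∨ ρ j = swap A (ρ j A))
include hA

lemma swap_apply_mem_closure_image (T : Set (Fin n)) :
    ∀ k ∈ closure (ρ '' T), swap A (k A) ∈ closure (ρ '' T) := by
  refine fun k hk => swap_apply_mem_closure_s3 ?_ hk
  rintro _ ⟨j, hj, rfl⟩
  rcases hA j with hfix | hswap
  · rw [hfix]
    exact swap_self_mem
  · rw [← hswap]
    exact subset_closure ⟨j, hj, rfl⟩

lemma mem_map_of_mem_closure_extendBySwap_image {K : Set (Fin (n + 1))}
    {g : Perm (Option α)} (hg : g ∈ closure (extendBySwap A ρ '' K)) (hnone : g none = none) :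
    g ∈ (closure (ρ '' (Fin.succ ⁻¹' K))).map optionCongrHom := by
  by_cases hK : 0 ∈ K
  · rw [closure_extendBySwap_image_of_zero_mem A ρ hK] at hg
    exact mem_map_of_mem_adjoinSwapNone_of_apply_none (swap_apply_mem_closure_image hA _) hg
      hnone
  · rwa [closure_extendBySwap_image_of_zero_notMem A ρ hK] at hg

lemma zero_mem_and_swap_mem_of_mem_closure_extendBySwap_image {K : Set (Fin (n + 1))}
    {g : Perm (Option α)} {b : α} (hg : g ∈ closure (extendBySwap A ρ '' K))
    (hb : g none = some b) : 0 ∈ K ∧ swap A b ∈ closure (ρ '' (Fin.succ ⁻¹' K)) := by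
  by_cases hK : 0 ∈ K
  · rw [closure_extendBySwap_image_of_zero_mem A ρ hK] at hg
    exact ⟨hK, swap_mem_of_mem_adjoinSwapNone_of_apply_none (swap_apply_mem_closure_image hA _)
      hg hb⟩
  · rw [closure_extendBySwap_image_of_zero_notMem A ρ hK] at hg
    obtain ⟨k, -, rfl⟩ := hg
    simp at hb

lemma intersectionProperty_extendBySwap (hρ : IntersectionProperty ρ) :
    IntersectionProperty (extendBySwap A ρ) := by
  intro I J
  have closure_image_inter : closure (ρ '' (Fin.succ ⁻¹' (I ∩ J))) =
      closure (ρ '' (Fin.succ ⁻¹' I)) ⊓ closure (ρ '' (Fin.succ ⁻¹' J)) := by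
    rw [Set.preimage_inter, hρ]
  have inter_le : closure (extendBySwap A ρ '' (I ∩ J)) ≤
      closure (extendBySwap A ρ '' I) ⊓ closure (extendBySwap A ρ '' J) :=
    le_inf (Subgroup.closure_mono (Set.image_mono Set.inter_subset_left))
      (Subgroup.closure_mono (Set.image_mono Set.inter_subset_right))
  have mem_of_apply_none :
      ∀ g ∈ closure (extendBySwap A ρ '' I) ⊓ closure (extendBySwap A ρ '' J),
        g none = none → g ∈ closure (extendBySwap A ρ '' (I ∩ J)) := by
    rintro g ⟨hgI, hgJ⟩ hnone
    refine map_closure_le_closure_extendBySwap_image A ρ _ ?_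
    rw [closure_image_inter, map_inf _ _ _ optionCongrHom_injective]
    exact ⟨mem_map_of_mem_closure_extendBySwap_image hA hgI hnone,
      mem_map_of_mem_closure_extendBySwap_image hA hgJ hnone⟩
  refine le_antisymm (fun g hg => ?_) inter_le
  cases hgnone : g none with
  | none => exact mem_of_apply_none g hg hgnone
  | some b =>
    obtain ⟨hI, hbI⟩ := zero_mem_and_swap_mem_of_mem_closure_extendBySwap_image hA hg.1 hgnone
    obtain ⟨hJ, hbJ⟩ := zero_mem_and_swap_mem_of_mem_closure_extendBySwap_image hA hg.2 hgnone
    set h := optionCongrHom (swap A b) * swap none (some A)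
    have hh : h ∈ closure (extendBySwap A ρ '' (I ∩ J)) :=
      mul_mem (map_closure_le_closure_extendBySwap_image A ρ _
          ⟨swap A b, by rw [closure_image_inter]; exact ⟨hbI, hbJ⟩, rfl⟩)
        (subset_closure ⟨0, ⟨hI, hJ⟩, rfl⟩)
    have hfix : (h⁻¹ * g) none = none := by
      rw [mul_apply, hgnone, inv_eq_iff_eq]
      simp [h]
    simpa using mul_mem hh (mem_of_apply_none _ (mul_mem (inv_mem (inter_le hh)) hg) hfix)

end IntersectionProperty

end ExtendBySwap

end Equiv.Perm

open Equiv.Perm in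
theorem extension_by_new_first_generator_is_string_C_group_general
    {Ω : Type*} [DecidableEq Ω]
    (r : ℕ) (hr : 1 ≤ r) (ρ : Fin r → Equiv.Perm Ω)
    (hinv : ∀ j : Fin r, orderOf (ρ j) = 2)
    (hstring : ∀ j k : Fin r, (j : ℕ) + 2 ≤ (k : ℕ) ∨ (k : ℕ) + 2 ≤ (j : ℕ) →
      (ρ j * ρ k) ^ 2 = 1)
    (hIP : ∀ I J : Set (Fin r),
      Subgroup.closure (ρ '' I) ⊓ Subgroup.closure (ρ '' J) = Subgroup.closure (ρ '' (I ∩ J)))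
    (A a : Ω)
    (h0 : ρ ⟨0, hr⟩ = Equiv.swap A a)
    (hfixA : ∀ j : Fin r, 1 ≤ (j : ℕ) → ρ j A = A)
    (ρ' : Fin (r + 1) → Equiv.Perm (Option Ω))
    (hρ'0 : ρ' ⟨0, Nat.succ_pos r⟩ = Equiv.swap none (some A))
    (hρ'succ : ∀ j : Fin r, ρ' j.succ = Equiv.optionCongr (ρ j)) :
    (∀ j k : Fin (r + 1), (j : ℕ) + 2 ≤ (k : ℕ) ∨ (k : ℕ) + 2 ≤ (j : ℕ) →
      (ρ' j * ρ' k) ^ 2 = 1) ∧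
    (∀ I J : Set (Fin (r + 1)),
      Subgroup.closure (ρ' '' I) ⊓ Subgroup.closure (ρ' '' J) =
        Subgroup.closure (ρ' '' (I ∩ J))) := by
  obtain rfl : ρ' = extendBySwap A ρ := funext fun j => Fin.cases hρ'0 hρ'succ j
  have hA : ∀ j, ρ j A = A ∨ ρ j = swap A (ρ j A) := by
    intro j
    by_cases hj : j = ⟨0, hr⟩
    · right
      simp [hj, h0]
    · exact Or.inl (hfixA j (Nat.one_le_iff_ne_zero.2 fun h => hj (Fin.ext h)))
  exact ⟨stringProperty_extendBySwap A ρ hstring (fun j => hinv j ▸ pow_orderOf_eq_one (ρ j))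
    hfixA, intersectionProperty_extendBySwap hA hIP⟩

/-- Extending a string C-group representation whose first generator is a transposition
`(A a)`, with `A` fixed by all other generators, by a new first generator swapping a new
point `B = none` with `A`, again yields a string C-group representation. -/
theorem extension_by_new_first_generator_is_string_C_group
    {Ω : Type*} [Fintype Ω] [DecidableEq Ω]
    (r : ℕ) (hr : 1 ≤ r) (ρ : Fin r → Equiv.Perm Ω)
    (hinv : ∀ j : Fin r, orderOf (ρ j) = 2)
    (hstring : ∀ j k : Fin r, (j : ℕ) + 2 ≤ (k : ℕ) ∨ (k : ℕ) + 2 ≤ (j : ℕ) →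
      (ρ j * ρ k) ^ 2 = 1)
    (hIP : ∀ I J : Set (Fin r),
      Subgroup.closure (ρ '' I) ⊓ Subgroup.closure (ρ '' J) = Subgroup.closure (ρ '' (I ∩ J)))
    (A a : Ω) (hAa : A ≠ a)
    (h0 : ρ ⟨0, hr⟩ = Equiv.swap A a)
    (hfixA : ∀ j : Fin r, 1 ≤ (j : ℕ) → ρ j A = A)
    (ρ' : Fin (r + 1) → Equiv.Perm (Option Ω))
    (hρ'0 : ρ' ⟨0, Nat.succ_pos r⟩ = Equiv.swap none (some A))
    (hρ'succ : ∀ j : Fin r, ρ' j.succ = Equiv.optionCongr (ρ j)) :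
    (∀ j k : Fin (r + 1), (j : ℕ) + 2 ≤ (k : ℕ) ∨ (k : ℕ) + 2 ≤ (j : ℕ) →
      (ρ' j * ρ' k) ^ 2 = 1) ∧
    (∀ I J : Set (Fin (r + 1)),
      Subgroup.closure (ρ' '' I) ⊓ Subgroup.closure (ρ' '' J) =
        Subgroup.closure (ρ' '' (I ∩ J))) :=
  extension_by_new_first_generator_is_string_C_group_general r hr ρ hinv hstring hIP A a h0 hfixA ρ'
    hρ'0 hρ'succ
end

section
/- In Sym(Fin 8), define the involutions ρ₋₁ := (0 1), ρ₀ := (1 2)·(5 6), ρ₁ := (2 3)·(4 5)·(6 7), ρ₂ := (3 4). Then the intersection property fails for the ordered family (ρ₋₁, ρ₀, ρ₁, ρ₂): specifically ⟨ρ₀, ρ₁, ρ₂⟩ ∩ ⟨ρ₋₁, ρ₀⟩ ≠ ⟨ρ₀⟩. -/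
/-!
The permutation `(5 6)` lies in both subgroups but not in `⟨ρ₀⟩ = {1, ρ₀}`. Indeed
`ρ₋₁ ρ₀ = (0 1 2)(5 6)` and `ρ₀ ρ₁ ρ₀ ρ₁ ρ₂ = (1 3 7 4 2)(5 6)`,
so `(5 6)` is the cube of the first and the fifth power of the second.
-/

open Equiv Subgroup

theorem Subgroup.eq_one_or_eq_of_mem_closure_singleton_of_sq_eq_one {G : Type*} [Group G]
    {a x : G} (ha : a ^ 2 = 1) (hx : x ∈ closure {a}) : x = 1 ∨ x = a := by
  obtain ⟨k, rfl⟩ := mem_closure_singleton.mp hx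
  rw [zpow_eq_zpow_emod' k ha]
  rcases Int.emod_two_eq k with hk | hk <;> simp [hk]

set_option maxRecDepth 10000 in
/-- The four involutions `(0 1)`, `(1 2)(5 6)`, `(2 3)(4 5)(6 7)`, `(3 4)` of `Sym(Fin 8)`
fail the intersection property: `⟨ρ₀, ρ₁, ρ₂⟩ ⊓ ⟨ρ₋₁, ρ₀⟩ ≠ ⟨ρ₀⟩`. -/
theorem counterexample_S8_intersection_property_fails
    (ρneg : Equiv.Perm (Fin 8)) (ρ0 ρ1 ρ2 : Equiv.Perm (Fin 8))
    (hneg : ρneg = Equiv.swap 0 1)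
    (h0 : ρ0 = Equiv.swap 1 2 * Equiv.swap 5 6)
    (h1 : ρ1 = Equiv.swap 2 3 * Equiv.swap 4 5 * Equiv.swap 6 7)
    (h2 : ρ2 = Equiv.swap 3 4) :
    Subgroup.closure {ρ0, ρ1, ρ2} ⊓ Subgroup.closure {ρneg, ρ0} ≠
      Subgroup.closure {ρ0} := by
  intro h
  have mem_left : swap 5 6 ∈ closure {ρ0, ρ1, ρ2} := by
    have hr0 : ρ0 ∈ closure {ρ0, ρ1, ρ2} := subset_closure (by simp)
    have hr1 : ρ1 ∈ closure {ρ0, ρ1, ρ2} := subset_closure (by simp)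
    have hr2 : ρ2 ∈ closure {ρ0, ρ1, ρ2} := subset_closure (by simp)
    have hpow : (ρ0 * ρ1 * ρ0 * ρ1 * ρ2) ^ 5 = swap 5 6 := by subst h0 h1 h2; decide
    rw [← hpow]
    exact pow_mem (mul_mem (mul_mem (mul_mem (mul_mem hr0 hr1) hr0) hr1) hr2) 5
  have mem_right : swap 5 6 ∈ closure {ρneg, ρ0} := by
    have hneg_mem : ρneg ∈ closure {ρneg, ρ0} := subset_closure (by simp)
    have hr0 : ρ0 ∈ closure {ρneg, ρ0} := subset_closure (by simp)
    have hpow : (ρneg * ρ0) ^ 3 = swap 5 6 := by subst hneg h0; decide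
    rw [← hpow]
    exact pow_mem (mul_mem hneg_mem hr0) 3
  have hsq : ρ0 ^ 2 = 1 := by subst h0; decide
  have mem_cyclic : swap 5 6 ∈ closure {ρ0} := h ▸ mem_inf.mpr ⟨mem_left, mem_right⟩
  have := eq_one_or_eq_of_mem_closure_singleton_of_sq_eq_one hsq mem_cyclic
  subst h0
  revert this
  decide
end

section
/- (Gluing theorem.) Let X and Y be finite types. Let σ₀,…,σ_{r−1} ∈ Sym(Option X) (r ≥ 1) be a string C-group representation such that σ₀ is exactly the transposition swapping none and some x₀ (for some x₀ ∈ X) and σⱼ(none) = none for all 1 ≤ j ≤ r−1. Let τ₀,…,τ_{s−1} ∈ Sym(Option Y) (s ≥ 1) be a string C-group representation such that τ₀ is exactly the transposition swapping none and some y₀ (for some y₀ ∈ Y) and τⱼ(none) = none for all 1 ≤ j ≤ s−1. Form the glued set Ω := Option (X ⊕ Y) and the injections f₁ : Option X → Ω (none ↦ none, some x ↦ some (Sum.inl x)) and f₂ : Option Y → Ω (none ↦ none, some y ↦ some (Sum.inr y)); transport each σⱼ along f₁ and each τⱼ along f₂, extending by the identity outside the respective range (Equiv.Perm.viaEmbedding).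 Define a family of r+s involutions θ₀,…,θ_{r+s−1} ∈ Sym(Ω) by θ_k := (transported σ_{r−1−k}) for 0 ≤ k ≤ r−1 and θ_k := (transported τ_{k−r}) for r ≤ k ≤ r+s−1. Then (θ₀,…,θ_{r+s−1}) satisfies both the string property and the intersection property, i.e. it is a string C-group representation of the subgroup of Sym(Ω) it generates. -/
/-!
Index the glued family by `ℕ` and let `p = none`. The first `r` generators move only points of
`U = range f₁`, the last `s` only points of `V = range f₂`, `U ∩ V = {p}`, every generator fixes
`p` or is a transposition through `p`, and only the generators with indices `r - 1` and `r` move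
`p`. So generators at distance at least two commute, which gives the string property.

For the intersection property we use the amalgamation criterion for string groups: the property
on `[a, b + 1]` follows from the property on `[a, b]` and on `[a + 1, b + 1]` together with
`⟨ρ a, …, ρ b⟩ ∩ ⟨ρ (a + 1), …, ρ (b + 1)⟩ = ⟨ρ (a + 1), …, ρ b⟩`. By induction on the length of
the interval, only this identity remains to be shown, for intervals straddling the gluing point.
In the group generated by the two parts `E_A` and `E_B`, transpositions through `p` propagate
along the orbits `O_A`, `O_B` of `p`, so every element factors as `d * a * b` with `d` moving only
points of `O_A ∪ O_B`, and `a`, `b` fixing `p` in `⟨E_A⟩`, `⟨E_B⟩` (these commute, having disjoint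
supports). Comparing the factorizations of an element of `⟨E_A ∪ E_B'⟩ ∩ ⟨E_A' ∪ E_B⟩` shows that
it lies in `⟨E_A' ∪ E_B'⟩`.
-/

open Equiv Equiv.Perm MulAction Set Subgroup
open scoped Pointwise

section MovingSubgroup

variable {Ω : Type*}

abbrev movingSubgroup (s : Set Ω) : Subgroup (Perm Ω) := fixingSubgroup (Perm Ω) sᶜ

variable {s t w : Set Ω} {g h : Perm Ω}

theorem mem_movingSubgroup_iff : g ∈ movingSubgroup s ↔ ∀ x ∉ s, g x = x := by
  simp [mem_fixingSubgroup_iff, Perm.smul_def]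

theorem movingSubgroup_mono (hst : s ⊆ t) : movingSubgroup s ≤ movingSubgroup t :=
  fixingSubgroup_antitone (Perm Ω) Ω (compl_subset_compl.2 hst)

theorem movingSubgroup_inf : movingSubgroup s ⊓ movingSubgroup t = movingSubgroup (s ∩ t) := by
  simp only [movingSubgroup, compl_inter, fixingSubgroup_union]

theorem apply_mem_of_mem_movingSubgroup (hg : g ∈ movingSubgroup s) {x : Ω} (hx : x ∈ s) :
    g x ∈ s := by
  by_contra hgx
  rw [g.injective (mem_movingSubgroup_iff.1 hg _ hgx)] at hgx
  exact hgx hx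

theorem swap_mem_movingSubgroup [DecidableEq Ω] {x y : Ω} (hx : x ∈ s) (hy : y ∈ s) :
    swap x y ∈ movingSubgroup s :=
  mem_movingSubgroup_iff.2 fun _ hz ↦
    swap_apply_of_ne_of_ne (ne_of_mem_of_not_mem hx hz).symm (ne_of_mem_of_not_mem hy hz).symm

theorem commute_of_mem_movingSubgroup (hg : g ∈ movingSubgroup s) (hh : h ∈ movingSubgroup t)
    (hst : Disjoint s t) : Commute g h := by
  refine Perm.Disjoint.commute fun x ↦ ?_
  by_cases hx : x ∈ s
  · exact Or.inr (mem_movingSubgroup_iff.1 hh x (hst.notMem_of_mem_left hx))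
  · exact Or.inl (mem_movingSubgroup_iff.1 hg x hx)

/-- On `t` the product `g * h` acts as `h`. -/
theorem mem_movingSubgroup_of_mul_mem (hg : g ∈ movingSubgroup s) (hh : h ∈ movingSubgroup t)
    (hst : Disjoint s t) (hgh : g * h ∈ movingSubgroup w) : h ∈ movingSubgroup w := by
  refine mem_movingSubgroup_iff.2 fun x hx ↦ ?_
  by_cases hxt : x ∈ t
  · have hgh := mem_movingSubgroup_iff.1 hgh x hx
    rwa [Perm.mul_apply, mem_movingSubgroup_iff.1 hg _
      (hst.notMem_of_mem_right (apply_mem_of_mem_movingSubgroup hh hxt))] at hgh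
  · exact mem_movingSubgroup_iff.1 hh x hxt

theorem disjoint_diff_singleton_left {p : Ω} (hst : s ∩ t = {p}) : Disjoint (s \ {p}) t :=
  Set.disjoint_left.2 fun _ hs ht ↦ hs.2 (hst.subset ⟨hs.1, ht⟩)

theorem viaEmbedding_mem_movingSubgroup {α : Type*} (e : Perm α) (ι : α ↪ Ω) :
    e.viaEmbedding ι ∈ movingSubgroup (range ι) :=
  mem_movingSubgroup_iff.2 fun x hx ↦ viaEmbedding_apply_of_notMem e ι x hx

theorem orbit_subset_orbit_of_le {G α : Type*} [Group G] [MulAction G α] {H K : Subgroup G}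
    (hHK : H ≤ K) (a : α) : orbit H a ⊆ orbit K a := by
  rintro _ ⟨g, rfl⟩
  exact ⟨⟨g, hHK g.2⟩, rfl⟩

theorem mem_orbit_subgroup_iff {H : Subgroup (Perm Ω)} {p v : Ω} :
    v ∈ orbit H p ↔ ∃ g ∈ H, g p = v := by
  simp [mem_orbit_iff, Subgroup.smul_def, Perm.smul_def]

variable [DecidableEq Ω]

theorem mem_of_forall_swap_mem [Finite Ω] {H : Subgroup (Perm Ω)} (hH : ∀ x, swap x (g x) ∈ H) :
    g ∈ H := by
  set S := {f ∈ (H : Set (Perm Ω)) | f.IsSwap}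
  have hSH : closure S ≤ H := (closure_le H).2 fun f hf ↦ hf.1
  refine hSH ((mem_closure_isSwap fun f hf ↦ hf.2).2 ⟨toFinite _, fun x ↦ ?_⟩)
  by_cases hx : x = g x
  · rw [← hx]; exact mem_orbit_self x
  · exact ⟨⟨swap x (g x), subset_closure ⟨hH x, x, g x, hx, rfl⟩⟩, swap_apply_left x (g x)⟩

theorem movingSubgroup_le_of_swap_mem [Finite Ω] {H : Subgroup (Perm Ω)} {p : Ω}
    (hH : ∀ v ∈ s, swap p v ∈ H) : movingSubgroup s ≤ H := by
  intro g hg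
  refine mem_of_forall_swap_mem fun x ↦ ?_
  by_cases hx : x ∈ s
  · exact SubmonoidClass.swap_mem_trans H (swap_comm x p ▸ hH x hx)
      (hH _ (apply_mem_of_mem_movingSubgroup hg hx))
  · rw [mem_movingSubgroup_iff.1 hg x hx, swap_self]
    exact H.one_mem

end MovingSubgroup

section Gluing

variable {Ω : Type*} [DecidableEq Ω]

def FixesOrSwaps (p : Ω) (g : Perm Ω) : Prop := g p = p ∨ ∃ q, g = swap p q

theorem FixesOrSwaps.inv {p : Ω} {g : Perm Ω} (h : FixesOrSwaps p g) : FixesOrSwaps p g⁻¹ := by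
  rcases h with h | ⟨q, rfl⟩
  · exact Or.inl (inv_eq_iff_eq.2 h.symm)
  · exact Or.inr ⟨q, swap_inv p q⟩

theorem FixesOrSwaps.swap_apply_mem {H : Subgroup (Perm Ω)} {p : Ω} {g : Perm Ω}
    (h : FixesOrSwaps p g) (hg : g ∈ H) : swap p (g p) ∈ H := by
  rcases h with h | ⟨q, rfl⟩
  · rw [h, swap_self]; exact H.one_mem
  · rwa [swap_apply_left]

theorem swap_mem_closure_of_mem_orbit {E : Set (Perm Ω)} {p v : Ω}
    (hE : ∀ e ∈ E, FixesOrSwaps p e) (hv : v ∈ orbit (closure E) p) : swap p v ∈ closure E := by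
  have step : ∀ e ∈ closure E, FixesOrSwaps p e →
      ∀ x, swap p x ∈ closure E → swap p (e x) ∈ closure E := by
    intro e he hpe x hx
    refine SubmonoidClass.swap_mem_trans _ (hpe.swap_apply_mem he) ?_
    rw [swap_apply_apply]
    exact mul_mem (mul_mem he hx) (inv_mem he)
  obtain ⟨g, hg, rfl⟩ := mem_orbit_subgroup_iff.1 hv
  clear hv
  suffices ∀ x, swap p x ∈ closure E → swap p (g x) ∈ closure E from
    this p (by rw [swap_self]; exact one_mem _)
  induction hg using closure_induction_left with
  | one => exact fun x hx ↦ hx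
  | mul_left e he g _ ih => exact fun x hx ↦ step e (subset_closure he) (hE e he) _ (ih x hx)
  | inv_mul_cancel e he g _ ih =>
    exact fun x hx ↦ step _ (inv_mem (subset_closure he)) (hE e he).inv _ (ih x hx)

theorem movingSubgroup_orbit_le_closure [Finite Ω] {E : Set (Perm Ω)} {p : Ω}
    (hE : ∀ e ∈ E, FixesOrSwaps p e) : movingSubgroup (orbit (closure E) p) ≤ closure E :=
  movingSubgroup_le_of_swap_mem fun _ hv ↦ swap_mem_closure_of_mem_orbit hE hv

def AttachedAt (p : Ω) (U : Set Ω) (E : Set (Perm Ω)) : Prop :=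
  E ⊆ movingSubgroup U ∧ ∀ e ∈ E, FixesOrSwaps p e

namespace AttachedAt

variable {p : Ω} {U : Set Ω} {E E' : Set (Perm Ω)} {a : Perm Ω}

theorem mono (h : AttachedAt p U E) (hE' : E' ⊆ E) : AttachedAt p U E' :=
  ⟨hE'.trans h.1, fun e he ↦ h.2 e (hE' he)⟩

theorem closure_le (h : AttachedAt p U E) : closure E ≤ movingSubgroup U :=
  (Subgroup.closure_le _).2 h.1

theorem orbit_subset (h : AttachedAt p U E) (hp : p ∈ U) : orbit (closure E) p ⊆ U := by
  intro v hv
  obtain ⟨g, hg, rfl⟩ := mem_orbit_subgroup_iff.1 hv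
  exact apply_mem_of_mem_movingSubgroup (h.closure_le hg) hp

theorem mem_movingSubgroup_diff (h : AttachedAt p U E) (ha : a ∈ closure E) (hap : a p = p) :
    a ∈ movingSubgroup (U \ {p}) := by
  rw [sdiff_eq, ← movingSubgroup_inf]
  refine ⟨h.closure_le ha, mem_movingSubgroup_iff.2 fun x hx ↦ ?_⟩
  rw [notMem_compl_iff, mem_singleton_iff] at hx
  rwa [hx]

end AttachedAt

section Decomposition

variable {p : Ω} {U V : Set Ω} {EA EB EA' EB' : Set (Perm Ω)}

theorem AttachedAt.commute (hUV : U ∩ V = {p}) (hA : AttachedAt p U EA)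
    (hB : AttachedAt p V EB) {a b : Perm Ω} (ha : a ∈ closure EA ⊓ stabilizer (Perm Ω) p)
    (hb : b ∈ closure EB ⊓ stabilizer (Perm Ω) p) : Commute a b :=
  commute_of_mem_movingSubgroup (hA.mem_movingSubgroup_diff ha.1 ha.2)
    (hB.mem_movingSubgroup_diff hb.1 hb.2)
    ((disjoint_diff_singleton_left hUV).mono_right sdiff_subset)

theorem AttachedAt.apply_mem_orbit_union (hUV : U ∩ V = {p}) (hA : AttachedAt p U EA)
    (hB : AttachedAt p V EB) {a : Perm Ω} (ha : a ∈ closure EA ⊓ stabilizer (Perm Ω) p)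
    {x : Ω} (hx : x ∈ orbit (closure EA) p ∪ orbit (closure EB) p) :
    a x ∈ orbit (closure EA) p ∪ orbit (closure EB) p := by
  rcases hx with hx | hx
  · obtain ⟨g, hg, rfl⟩ := mem_orbit_subgroup_iff.1 hx
    exact Or.inl (mem_orbit_subgroup_iff.2 ⟨a * g, mul_mem ha.1 hg, rfl⟩)
  · have hxV : x ∈ V := hB.orbit_subset (hUV.symm.subset rfl).2 hx
    have hxU : x ∉ U \ {p} := fun hxU ↦ hxU.2 (hUV.subset ⟨hxU.1, hxV⟩)
    rw [mem_movingSubgroup_iff.1 (hA.mem_movingSubgroup_diff ha.1 ha.2) x hxU]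
    exact Or.inr hx

/-- `Sym(O_A ∪ O_B) · A_p · B_p`, with `O_A`, `O_B` the orbits of `p` under `⟨EA⟩`, `⟨EB⟩` and
`A_p`, `B_p` its stabilizers there. -/
def gluedProduct (p : Ω) (EA EB : Set (Perm Ω)) : Set (Perm Ω) :=
  (movingSubgroup (orbit (closure EA) p ∪ orbit (closure EB) p) : Set (Perm Ω)) *
    ((closure EA ⊓ stabilizer (Perm Ω) p : Subgroup (Perm Ω)) : Set (Perm Ω)) *
    ((closure EB ⊓ stabilizer (Perm Ω) p : Subgroup (Perm Ω)) : Set (Perm Ω))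

theorem mul_mem_gluedProduct (hUV : U ∩ V = {p}) (hA : AttachedAt p U EA)
    (hB : AttachedAt p V EB) {g e : Perm Ω} (hg : g ∈ gluedProduct p EA EB)
    (he : e ∈ closure EA ∨ e ∈ closure EB) (hpe : FixesOrSwaps p e) :
    g * e ∈ gluedProduct p EA EB := by
  obtain ⟨_, ⟨d, hd, a, ha, rfl⟩, b, hb, rfl⟩ := hg
  rcases hpe with hpe | ⟨q, rfl⟩
  · rcases he with he | he
    · have hbe : Commute b e := (hA.commute hUV hB ⟨he, hpe⟩ hb).symm
      rw [mul_assoc (d * a), hbe.eq, ← mul_assoc, mul_assoc d]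
      exact Set.mul_mem_mul (Set.mul_mem_mul hd (mul_mem ha ⟨he, hpe⟩)) hb
    · rw [mul_assoc (d * a)]
      exact Set.mul_mem_mul (Set.mul_mem_mul hd ha) (mul_mem hb ⟨he, hpe⟩)
  · -- conjugating by `a * b`, which fixes `p` and preserves the union of the two orbits
    have hq : q ∈ orbit (closure EA) p ∪ orbit (closure EB) p := by
      rcases he with he | he
      · exact Or.inl (mem_orbit_subgroup_iff.2 ⟨_, he, swap_apply_left p q⟩)
      · exact Or.inr (mem_orbit_subgroup_iff.2 ⟨_, he, swap_apply_left p q⟩)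
    have habq : a (b q) ∈ orbit (closure EA) p ∪ orbit (closure EB) p :=
      hA.apply_mem_orbit_union hUV hB ha (union_comm _ _ ▸
        hB.apply_mem_orbit_union (inter_comm U V ▸ hUV) hA hb (union_comm _ _ ▸ hq))
    have hconj := swap_apply_apply (a * b) p q
    rw [Perm.mul_apply a b p, show b p = p from hb.2, show a p = p from ha.2] at hconj
    have hmul : d * a * b * swap p q = d * swap p (a (b q)) * a * b := by
      rw [← Perm.mul_apply, hconj]
      group
    rw [hmul]
    exact Set.mul_mem_mul (Set.mul_mem_mul (mul_mem hd (swap_mem_movingSubgroup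
      (Or.inl (mem_orbit_self p)) habq)) ha) hb

theorem closure_union_subset_gluedProduct (hUV : U ∩ V = {p}) (hA : AttachedAt p U EA)
    (hB : AttachedAt p V EB) : (closure (EA ∪ EB) : Set (Perm Ω)) ⊆ gluedProduct p EA EB := by
  intro g hg
  induction hg using closure_induction_right with
  | one => exact ⟨1, ⟨1, one_mem _, 1, one_mem _, mul_one 1⟩, 1, one_mem _, mul_one 1⟩
  | mul_right g _ e he ih =>
    exact mul_mem_gluedProduct hUV hA hB ih
      (he.imp (fun h ↦ subset_closure h) fun h ↦ subset_closure h) (he.elim (hA.2 e) (hB.2 e))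
  | mul_inv_cancel g _ e he ih =>
    exact mul_mem_gluedProduct hUV hA hB ih
      (he.imp (fun h ↦ inv_mem (subset_closure h)) fun h ↦ inv_mem (subset_closure h))
      (he.elim (hA.2 e) (hB.2 e)).inv

theorem AttachedAt.mem_movingSubgroup_orbit_of_mul_mem (hUV : U ∩ V = {p})
    (hA : AttachedAt p U EA) (hB : AttachedAt p V EB) {a b : Perm Ω}
    (ha : a ∈ closure EA ⊓ stabilizer (Perm Ω) p) (hb : b ∈ closure EB ⊓ stabilizer (Perm Ω) p)
    (hab : a * b ∈ movingSubgroup (orbit (closure EA) p ∪ orbit (closure EB) p)) :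
    b ∈ movingSubgroup (orbit (closure EB) p) := by
  have hbV := hB.mem_movingSubgroup_diff hb.1 hb.2
  have hb' : b ∈ movingSubgroup ((orbit (closure EA) p ∪ orbit (closure EB) p) ∩ (V \ {p})) :=
    movingSubgroup_inf ▸ ⟨mem_movingSubgroup_of_mul_mem (hA.mem_movingSubgroup_diff ha.1 ha.2)
      hbV ((disjoint_diff_singleton_left hUV).mono_right sdiff_subset) hab, hbV⟩
  refine movingSubgroup_mono ?_ hb'
  rintro x ⟨hx | hx, hxV⟩
  · exact absurd (hUV.subset ⟨hA.orbit_subset (hUV.symm.subset rfl).1 hx, hxV.1⟩) hxV.2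
  · exact hx

theorem AttachedAt.movingSubgroup_inter_le_closure [Finite Ω] (hUV : U ∩ V = {p})
    (hA : AttachedAt p U EA) (hB : AttachedAt p V EB) (hA' : EA' ⊆ EA) (hB' : EB' ⊆ EB) :
    movingSubgroup ((orbit (closure EA') p ∪ orbit (closure EB) p) ∩
      (orbit (closure EA) p ∪ orbit (closure EB') p)) ≤ closure (EA' ∪ EB') := by
  have hp : p ∈ U ∩ V := hUV.symm.subset rfl
  refine (movingSubgroup_mono ?_).trans (movingSubgroup_orbit_le_closure
    fun e he ↦ he.elim (fun h ↦ hA.2 e (hA' h)) fun h ↦ hB.2 e (hB' h))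
  rintro x ⟨hx | hx, hx' | hx'⟩
  · exact orbit_subset_orbit_of_le (closure_mono subset_union_left) p hx
  · exact orbit_subset_orbit_of_le (closure_mono subset_union_left) p hx
  · rw [hUV.subset ⟨hA.orbit_subset hp.1 hx', hB.orbit_subset hp.2 hx⟩]
    exact mem_orbit_self p
  · exact orbit_subset_orbit_of_le (closure_mono subset_union_right) p hx'

/-- The two factorizations differ by `u * v` with `u = a₂ * a₁⁻¹ ∈ A_p` moving only points of
`O_A` and `v = b₂ * b₁⁻¹ ∈ B_p` moving only points of `O_B`, and `d₂ * v = d₁ * u⁻¹`. -/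
theorem AttachedAt.mul_mem_movingSubgroup_inter (hUV : U ∩ V = {p}) (hA : AttachedAt p U EA)
    (hB : AttachedAt p V EB) (hA' : EA' ⊆ EA) (hB' : EB' ⊆ EB) {d₁ d₂ a₁ a₂ b₁ b₂ : Perm Ω}
    (hd₁ : d₁ ∈ movingSubgroup (orbit (closure EA) p ∪ orbit (closure EB') p))
    (hd₂ : d₂ ∈ movingSubgroup (orbit (closure EA') p ∪ orbit (closure EB) p))
    (ha₁ : a₁ ∈ closure EA ⊓ stabilizer (Perm Ω) p) (ha₂ : a₂ ∈ closure EA ⊓ stabilizer (Perm Ω) p)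
    (hb₁ : b₁ ∈ closure EB ⊓ stabilizer (Perm Ω) p) (hb₂ : b₂ ∈ closure EB ⊓ stabilizer (Perm Ω) p)
    (heq : d₂ * a₂ * b₂ = d₁ * a₁ * b₁) :
    d₂ * (b₂ * b₁⁻¹) ∈ movingSubgroup ((orbit (closure EA') p ∪ orbit (closure EB) p) ∩
      (orbit (closure EA) p ∪ orbit (closure EB') p)) := by
  have hu : a₂ * a₁⁻¹ ∈ closure EA ⊓ stabilizer (Perm Ω) p := mul_mem ha₂ (inv_mem ha₁)
  have hv : b₂ * b₁⁻¹ ∈ closure EB ⊓ stabilizer (Perm Ω) p := mul_mem hb₂ (inv_mem hb₁)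
  have huv := hA.commute hUV hB hu hv
  have hduv : d₂⁻¹ * d₁ = (a₂ * a₁⁻¹) * (b₂ * b₁⁻¹) := by
    have h := (hA.commute hUV hB (inv_mem ha₁) hv).eq
    calc d₂⁻¹ * d₁ = d₂⁻¹ * (d₁ * a₁ * b₁) * b₁⁻¹ * a₁⁻¹ := by group
      _ = a₂ * ((b₂ * b₁⁻¹) * a₁⁻¹) := by rw [← heq]; group
      _ = (a₂ * a₁⁻¹) * (b₂ * b₁⁻¹) := by rw [← h]; group
  have hd : d₂⁻¹ * d₁ ∈ movingSubgroup (orbit (closure EA) p ∪ orbit (closure EB) p) :=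
    mul_mem (inv_mem (movingSubgroup_mono (union_subset_union_left _
      (orbit_subset_orbit_of_le (closure_mono hA') p)) hd₂))
      (movingSubgroup_mono (union_subset_union_right _
        (orbit_subset_orbit_of_le (closure_mono hB') p)) hd₁)
  have hvO := hA.mem_movingSubgroup_orbit_of_mul_mem hUV hB hu hv (hduv ▸ hd)
  have huO := hB.mem_movingSubgroup_orbit_of_mul_mem (inter_comm U V ▸ hUV) hA hv hu
    (union_comm (orbit (closure EA) p) _ ▸ huv.eq ▸ hduv ▸ hd)
  have he : d₂ * (b₂ * b₁⁻¹) = d₁ * (a₂ * a₁⁻¹)⁻¹ := by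
    rw [eq_mul_inv_iff_mul_eq, mul_assoc, ← huv.eq, ← hduv, mul_inv_cancel_left]
  rw [← movingSubgroup_inf]
  refine ⟨mul_mem hd₂ (movingSubgroup_mono subset_union_right hvO), ?_⟩
  rw [he]
  exact Subgroup.mul_mem _ hd₁ (Subgroup.inv_mem _ (movingSubgroup_mono subset_union_left huO))

theorem closure_union_inf_closure_union_le [Finite Ω] (hUV : U ∩ V = {p})
    (hA : AttachedAt p U EA) (hB : AttachedAt p V EB) (hA' : EA' ⊆ EA) (hB' : EB' ⊆ EB) :
    closure (EA ∪ EB') ⊓ closure (EA' ∪ EB) ≤ closure (EA' ∪ EB') := by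
  rintro g ⟨hg₁, hg₂⟩
  obtain ⟨_, ⟨d₁, hd₁, a₁, ha₁, rfl⟩, b₁, hb₁, rfl⟩ :=
    closure_union_subset_gluedProduct hUV hA (hB.mono hB') hg₁
  obtain ⟨_, ⟨d₂, hd₂, a₂, ha₂, rfl⟩, b₂, hb₂, heq⟩ :=
    closure_union_subset_gluedProduct hUV (hA.mono hA') hB hg₂
  beta_reduce at heq ⊢
  have ha₂A : a₂ ∈ closure EA ⊓ stabilizer (Perm Ω) p := ⟨closure_mono hA' ha₂.1, ha₂.2⟩
  have hb₁B : b₁ ∈ closure EB ⊓ stabilizer (Perm Ω) p := ⟨closure_mono hB' hb₁.1, hb₁.2⟩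
  have he := hA.movingSubgroup_inter_le_closure hUV hB hA' hB'
    (hA.mul_mem_movingSubgroup_inter hUV hB hA' hB' hd₁ hd₂ ha₁ ha₂A hb₁B hb₂ heq)
  have hg : d₁ * a₁ * b₁ = d₂ * (b₂ * b₁⁻¹) * a₂ * b₁ := by
    rw [mul_assoc d₂, ← (hA.commute hUV hB ha₂A (mul_mem hb₂ (inv_mem hb₁B))).eq, ← heq]
    group
  rw [hg]
  exact mul_mem (mul_mem he (Subgroup.closure_mono subset_union_left ha₂.1))
    (Subgroup.closure_mono subset_union_right hb₁.1)

end Decomposition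

end Gluing

section IntersectionProperty

variable {ι κ G H : Type*} [Group G] [Group H]

def IntersectionPropertyOn (ρ : ι → G) (S : Set ι) : Prop :=
  ∀ ⦃I J : Set ι⦄, I ⊆ S → J ⊆ S →
    closure (ρ '' I) ⊓ closure (ρ '' J) ≤ closure (ρ '' (I ∩ J))

variable {ρ : ι → G} {S T : Set ι}

theorem IntersectionPropertyOn.mono (h : IntersectionPropertyOn ρ S) (hTS : T ⊆ S) :
    IntersectionPropertyOn ρ T :=
  fun _ _ hI hJ ↦ h (hI.trans hTS) (hJ.trans hTS)

theorem IntersectionPropertyOn.map {σ : ι → G} (h : IntersectionPropertyOn σ S) {φ : G →* H}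
    (hφ : Function.Injective φ) : IntersectionPropertyOn (φ ∘ σ) S := by
  intro I J hI hJ
  simp only [image_comp, ← MonoidHom.map_closure, ← map_inf _ _ φ hφ]
  exact map_mono (h hI hJ)

theorem intersectionPropertyOn_image_iff {e : κ → ι} {S : Set κ} (he : InjOn e S) :
    IntersectionPropertyOn ρ (e '' S) ↔ IntersectionPropertyOn (ρ ∘ e) S := by
  refine ⟨fun h I J hI hJ ↦ ?_, fun h I J hI hJ ↦ ?_⟩
  · simpa only [image_comp, he.image_inter hI hJ] using h (image_mono hI) (image_mono hJ)
  · obtain ⟨I, hIS, rfl⟩ := subset_image_iff.1 hI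
    obtain ⟨J, hJS, rfl⟩ := subset_image_iff.1 hJ
    rw [← he.image_inter hIS hJS, ← image_comp, ← image_comp, ← image_comp]
    exact h hIS hJS

theorem IntersectionPropertyOn.closure_inf_eq (h : IntersectionPropertyOn ρ S) {I J : Set ι}
    (hI : I ⊆ S) (hJ : J ⊆ S) :
    closure (ρ '' I) ⊓ closure (ρ '' J) = closure (ρ '' (I ∩ J)) :=
  (h hI hJ).antisymm (le_inf (closure_mono (image_mono inter_subset_left))
    (closure_mono (image_mono inter_subset_right)))

end IntersectionProperty

section StringAmalgamation

variable {G : Type*} [Group G] {ρ : ℕ → G}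

theorem exists_eq_mul_of_mem_closure {K : Set ℕ}
    (hcomm : ∀ i ∈ K, ∀ j ∈ K, i + 2 ≤ j → Commute (ρ i) (ρ j)) {c : ℕ} (hc : c ∉ K) {g : G}
    (hg : g ∈ closure (ρ '' K)) :
    ∃ l ∈ closure (ρ '' (K ∩ Iio c)), ∃ r ∈ closure (ρ '' (K ∩ Ioi c)), g = l * r := by
  have hK : K = (K ∩ Iio c) ∪ (K ∩ Ioi c) := by
    ext i
    simp only [mem_union, mem_inter_iff, mem_Iio, mem_Ioi]
    constructor
    · intro hi
      exact (lt_or_gt_of_ne fun (h : i = c) ↦ hc (h ▸ hi)).imp (⟨hi, ·⟩) (⟨hi, ·⟩)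
    · rintro (h | h) <;> exact h.1
  have hLR : closure (ρ '' (K ∩ Iio c)) ≤ normalizer (closure (ρ '' (K ∩ Ioi c)) : Set G) := by
    refine le_trans ?_ (centralizer_le_normalizer _)
    rw [centralizer_closure, closure_le]
    rintro _ ⟨i, ⟨hiK, hic⟩, rfl⟩ _ ⟨j, ⟨hjK, hjc⟩, rfl⟩
    exact (hcomm i hiK j hjK (by simp at hic hjc; omega)).symm.eq
  rw [hK, image_union, Subgroup.closure_union, ← SetLike.mem_coe,
    coe_mul_of_left_le_normalizer_right _ _ hLR] at hg
  obtain ⟨l, hl, r, hr, rfl⟩ := hg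
  exact ⟨l, hl, r, hr, rfl⟩

variable {a b c : ℕ}

theorem Icc_inter_Iio_subset (hc : c ∈ Icc a (b + 1)) : Icc a (b + 1) ∩ Iio c ⊆ Icc a b :=
  fun i hi ↦ by simp only [mem_inter_iff, mem_Icc, mem_Iio] at hi hc ⊢; omega

theorem Icc_inter_Ioi_subset (hc : c ∈ Icc a (b + 1)) :
    Icc a (b + 1) ∩ Ioi c ⊆ Icc (a + 1) (b + 1) :=
  fun i hi ↦ by simp only [mem_inter_iff, mem_Icc, mem_Ioi] at hi hc ⊢; omega

theorem closure_Iio_inf_closure_Ioi_eq_bot (hT : IntersectionPropertyOn ρ (Icc a b))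
    (hB : IntersectionPropertyOn ρ (Icc (a + 1) (b + 1)))
    (hkey : closure (ρ '' Icc a b) ⊓ closure (ρ '' Icc (a + 1) (b + 1)) ≤
      closure (ρ '' Icc (a + 1) b)) (hc : c ∈ Icc a (b + 1)) :
    closure (ρ '' (Icc a (b + 1) ∩ Iio c)) ⊓ closure (ρ '' (Icc a (b + 1) ∩ Ioi c)) = ⊥ := by
  have hL := Icc_inter_Iio_subset hc
  have hR := Icc_inter_Ioi_subset hc
  rw [eq_bot_iff]
  rintro g ⟨hgL, hgR⟩
  have hgM := hkey ⟨closure_mono (image_mono hL) hgL, closure_mono (image_mono hR) hgR⟩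
  have hgRM := hB hR (Icc_subset_Icc_right b.le_succ) ⟨hgR, hgM⟩
  have hg := hT hL (inter_subset_right.trans (Icc_subset_Icc_left a.le_succ)) ⟨hgL, hgRM⟩
  have hempty : Icc a (b + 1) ∩ Iio c ∩ (Icc a (b + 1) ∩ Ioi c ∩ Icc (a + 1) b) = ∅ := by
    ext i
    simp only [mem_inter_iff, mem_Iio, mem_Ioi, mem_Icc, mem_empty_iff_false, iff_false]
    omega
  rwa [hempty, image_empty, Subgroup.closure_empty] at hg

theorem closure_inf_le_of_notMem
    (hcomm : ∀ i ∈ Icc a (b + 1), ∀ j ∈ Icc a (b + 1), i + 2 ≤ j → Commute (ρ i) (ρ j))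
    (hT : IntersectionPropertyOn ρ (Icc a b)) (hB : IntersectionPropertyOn ρ (Icc (a + 1) (b + 1)))
    (hkey : closure (ρ '' Icc a b) ⊓ closure (ρ '' Icc (a + 1) (b + 1)) ≤
      closure (ρ '' Icc (a + 1) b))
    {I J : Set ℕ} (hI : I ⊆ Icc a (b + 1)) (hJ : J ⊆ Icc a (b + 1)) (hc : c ∈ Icc a (b + 1))
    (hcI : c ∉ I) (hcJ : c ∉ J) :
    closure (ρ '' I) ⊓ closure (ρ '' J) ≤ closure (ρ '' (I ∩ J)) := by
  rintro g ⟨hgI, hgJ⟩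
  obtain ⟨l₁, hl₁, r₁, hr₁, rfl⟩ :=
    exists_eq_mul_of_mem_closure (fun i hi j hj ↦ hcomm i (hI hi) j (hI hj)) hcI hgI
  obtain ⟨l₂, hl₂, r₂, hr₂, heq⟩ :=
    exists_eq_mul_of_mem_closure (fun i hi j hj ↦ hcomm i (hJ hi) j (hJ hj)) hcJ hgJ
  have hIJ : ∀ {K X : Set ℕ}, K ⊆ Icc a (b + 1) → K ∩ X ⊆ Icc a (b + 1) ∩ X :=
    fun hK ↦ inter_subset_inter_left _ hK
  -- the two factorizations agree because `⟨ρ i | i < c⟩ ∩ ⟨ρ i | i > c⟩` is trivial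
  have hlr : l₂⁻¹ * l₁ = r₂ * r₁⁻¹ := by
    rw [inv_mul_eq_iff_eq_mul, ← mul_assoc, ← heq]
    group
  have hl : l₂⁻¹ * l₁ = 1 := by
    refine (eq_bot_iff.1 (closure_Iio_inf_closure_Ioi_eq_bot hT hB hkey hc)) (mem_inf.2 ⟨?_, ?_⟩)
    · exact mul_mem (inv_mem (closure_mono (image_mono (hIJ hJ)) hl₂))
        (closure_mono (image_mono (hIJ hI)) hl₁)
    · exact hlr ▸ mul_mem (closure_mono (image_mono (hIJ hJ)) hr₂)
        (inv_mem (closure_mono (image_mono (hIJ hI)) hr₁))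
  obtain rfl : l₁ = l₂ := (inv_mul_eq_one.1 hl).symm
  obtain rfl : r₁ = r₂ := by
    rw [hl, eq_comm, mul_inv_eq_one] at hlr
    exact hlr.symm
  have hl := hT ((hIJ hI).trans (Icc_inter_Iio_subset hc)) ((hIJ hJ).trans
    (Icc_inter_Iio_subset hc)) (mem_inf.2 ⟨hl₁, hl₂⟩)
  have hr := hB ((hIJ hI).trans (Icc_inter_Ioi_subset hc)) ((hIJ hJ).trans
    (Icc_inter_Ioi_subset hc)) (mem_inf.2 ⟨hr₁, hr₂⟩)
  have hsub : ∀ X : Set ℕ, I ∩ X ∩ (J ∩ X) ⊆ I ∩ J := fun _ _ hi ↦ ⟨hi.1.1, hi.2.1⟩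
  exact mul_mem (closure_mono (image_mono (hsub _)) hl) (closure_mono (image_mono (hsub _)) hr)

theorem closure_inf_closure_Icc_le
    (hcomm : ∀ i ∈ Icc a (b + 1), ∀ j ∈ Icc a (b + 1), i + 2 ≤ j → Commute (ρ i) (ρ j))
    (hB : IntersectionPropertyOn ρ (Icc (a + 1) (b + 1)))
    (hkey : closure (ρ '' Icc a b) ⊓ closure (ρ '' Icc (a + 1) (b + 1)) ≤
      closure (ρ '' Icc (a + 1) b))
    {J : Set ℕ} (hJ : J ⊆ Icc a (b + 1)) :
    closure (ρ '' J) ⊓ closure (ρ '' Icc a b) ≤ closure (ρ '' (J ∩ Icc a b)) := by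
  intro g hg
  obtain ⟨hgJ, hgT⟩ := mem_inf.1 hg
  by_cases hSJ : Icc a (b + 1) ⊆ J
  · exact closure_mono (image_mono (subset_inter ((Icc_subset_Icc_right b.le_succ).trans hSJ)
      subset_rfl)) hgT
  obtain ⟨c, hc, hcJ⟩ := not_subset.1 hSJ
  obtain ⟨l, hl, r, hr, rfl⟩ :=
    exists_eq_mul_of_mem_closure (fun i hi j hj ↦ hcomm i (hJ hi) j (hJ hj)) hcJ hgJ
  have hlJT : J ∩ Iio c ⊆ J ∩ Icc a b :=
    subset_inter inter_subset_left ((inter_subset_inter_left _ hJ).trans (Icc_inter_Iio_subset hc))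
  have hl' := closure_mono (image_mono hlJT) hl
  have hrB : J ∩ Ioi c ⊆ Icc (a + 1) (b + 1) :=
    (inter_subset_inter_left _ hJ).trans (Icc_inter_Ioi_subset hc)
  have hrT : r ∈ closure (ρ '' Icc a b) := by
    simpa using mul_mem (inv_mem (closure_mono (image_mono inter_subset_right) hl')) hgT
  have hrM := hkey (mem_inf.2 ⟨hrT, closure_mono (image_mono hrB) hr⟩)
  have hr' := hB hrB (Icc_subset_Icc_right b.le_succ) (mem_inf.2 ⟨hr, hrM⟩)
  refine mul_mem hl' (closure_mono (image_mono ?_) hr')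
  exact inter_subset_inter inter_subset_left (Icc_subset_Icc_left a.le_succ)

theorem closure_diff_singleton_inf_le
    (hcomm : ∀ i ∈ Icc a (b + 1), ∀ j ∈ Icc a (b + 1), i + 2 ≤ j → Commute (ρ i) (ρ j))
    (hT : IntersectionPropertyOn ρ (Icc a b)) (hB : IntersectionPropertyOn ρ (Icc (a + 1) (b + 1)))
    (hkey : closure (ρ '' Icc a b) ⊓ closure (ρ '' Icc (a + 1) (b + 1)) ≤
      closure (ρ '' Icc (a + 1) b))
    {c c' : ℕ} (hc' : c' ∈ Icc a (b + 1)) (hcc' : c < c') :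
    closure (ρ '' (Icc a (b + 1) \ {c})) ⊓ closure (ρ '' (Icc a (b + 1) \ {c'})) ≤
      closure (ρ '' ((Icc a (b + 1) \ {c}) ∩ (Icc a (b + 1) \ {c'}))) := by
  set S := Icc a (b + 1)
  intro g hg
  obtain ⟨hgc, hgc'⟩ := mem_inf.1 hg
  obtain ⟨l, hl, r, hr, rfl⟩ := exists_eq_mul_of_mem_closure
    (fun i hi j hj ↦ hcomm i hi.1 j hj.1) (fun h ↦ h.2 rfl) hgc'
  have hrc : (S \ {c'}) ∩ Ioi c' ⊆ S \ {c} := fun i hi ↦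
    ⟨hi.1.1, fun h ↦ (hcc'.trans hi.2).ne' (mem_singleton_iff.1 h)⟩
  have hlc : l ∈ closure (ρ '' (S \ {c})) := by
    simpa using mul_mem hgc (inv_mem (closure_mono (image_mono hrc) hr))
  have hlT : (S \ {c'}) ∩ Iio c' ⊆ Icc a b :=
    (inter_subset_inter_left _ sdiff_subset).trans (Icc_inter_Iio_subset hc')
  have hl' := closure_inf_closure_Icc_le hcomm hB hkey sdiff_subset
    (mem_inf.2 ⟨hlc, closure_mono (image_mono hlT) hl⟩)
  have hl'' := hT hlT inter_subset_right (mem_inf.2 ⟨hl, hl'⟩)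
  have hlP : (S \ {c'}) ∩ Iio c' ∩ ((S \ {c}) ∩ Icc a b) ⊆ (S \ {c}) ∩ (S \ {c'}) :=
    fun i hi ↦ ⟨hi.2.1, hi.1.1⟩
  have hrP : (S \ {c'}) ∩ Ioi c' ⊆ (S \ {c}) ∩ (S \ {c'}) := fun i hi ↦ ⟨hrc hi, hi.1⟩
  exact mul_mem (closure_mono (image_mono hlP) hl'') (closure_mono (image_mono hrP) hr)

theorem intersectionPropertyOn_Icc_succ
    (hcomm : ∀ i ∈ Icc a (b + 1), ∀ j ∈ Icc a (b + 1), i + 2 ≤ j → Commute (ρ i) (ρ j))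
    (hT : IntersectionPropertyOn ρ (Icc a b)) (hB : IntersectionPropertyOn ρ (Icc (a + 1) (b + 1)))
    (hkey : closure (ρ '' Icc a b) ⊓ closure (ρ '' Icc (a + 1) (b + 1)) ≤
      closure (ρ '' Icc (a + 1) b)) :
    IntersectionPropertyOn ρ (Icc a (b + 1)) := by
  intro I J hI hJ
  by_cases hSI : Icc a (b + 1) ⊆ I
  · rw [inter_eq_right.2 (hJ.trans hSI)]
    exact inf_le_right
  by_cases hSJ : Icc a (b + 1) ⊆ J
  · rw [inter_eq_left.2 (hI.trans hSJ)]
    exact inf_le_left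
  obtain ⟨c, hc, hcI⟩ := not_subset.1 hSI
  obtain ⟨c', hc', hc'J⟩ := not_subset.1 hSJ
  obtain rfl | hne := eq_or_ne c c'
  · exact closure_inf_le_of_notMem hcomm hT hB hkey hI hJ hc hcI hc'J
  -- land in the subgroup generated by `S \ {c, c'}`, then use the common-missing-index case twice
  have hIc : I ⊆ Icc a (b + 1) \ {c} := fun i hi ↦
    ⟨hI hi, fun h ↦ hcI (mem_singleton_iff.1 h ▸ hi)⟩
  have hJc' : J ⊆ Icc a (b + 1) \ {c'} := fun i hi ↦
    ⟨hJ hi, fun h ↦ hc'J (mem_singleton_iff.1 h ▸ hi)⟩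
  have hP : closure (ρ '' I) ⊓ closure (ρ '' J) ≤
      closure (ρ '' ((Icc a (b + 1) \ {c}) ∩ (Icc a (b + 1) \ {c'}))) := by
    refine le_trans (inf_le_inf (closure_mono (image_mono hIc)) (closure_mono (image_mono hJc')))
      ?_
    rcases hne.lt_or_gt with h | h
    · exact closure_diff_singleton_inf_le hcomm hT hB hkey hc' h
    · rw [inf_comm, inter_comm]
      exact closure_diff_singleton_inf_le hcomm hT hB hkey hc h
  intro g hg
  have hcP : c ∉ (Icc a (b + 1) \ {c}) ∩ (Icc a (b + 1) \ {c'}) := fun h ↦ h.1.2 (mem_singleton c)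
  have hc'P : c' ∉ I ∩ ((Icc a (b + 1) \ {c}) ∩ (Icc a (b + 1) \ {c'})) := fun h ↦
    h.2.2.2 (mem_singleton c')
  have hPS : (Icc a (b + 1) \ {c}) ∩ (Icc a (b + 1) \ {c'}) ⊆ Icc a (b + 1) :=
    inter_subset_left.trans sdiff_subset
  have hIP := closure_inf_le_of_notMem hcomm hT hB hkey hI hPS hc hcI hcP
    (mem_inf.2 ⟨(mem_inf.1 hg).1, hP hg⟩)
  have hIPJ := closure_inf_le_of_notMem hcomm hT hB hkey (inter_subset_left.trans hI) hJ hc'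
    hc'P hc'J (mem_inf.2 ⟨hIP, (mem_inf.1 hg).2⟩)
  exact closure_mono (image_mono (inter_subset_inter_left _ inter_subset_left)) hIPJ

end StringAmalgamation

section GluedFamily

variable {Ω : Type*} [DecidableEq Ω]

structure IsGluingSide (ρ : ℕ → Perm Ω) (S : Set ℕ) (i₀ : ℕ) (p : Ω) (U : Set Ω) : Prop where
  attachedAt : AttachedAt p U (ρ '' S)
  apply_eq_of_ne : ∀ i ∈ S, i ≠ i₀ → ρ i p = p
  sq_eq_one : ∀ i ∈ S, ρ i ^ 2 = 1
  commute : ∀ i ∈ S, ∀ j ∈ S, i + 2 ≤ j → Commute (ρ i) (ρ j)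
  intersectionPropertyOn : IntersectionPropertyOn ρ S

namespace IsGluingSide

variable {ρ : ℕ → Perm Ω} {r n : ℕ} {p : Ω} {U V : Set Ω}

theorem commute_glue (hUV : U ∩ V = {p}) (hA : IsGluingSide ρ (Iio r) (r - 1) p U)
    (hB : IsGluingSide ρ (Ico r n) r p V) {i j : ℕ} (hij : i + 2 ≤ j) (hj : j < n) :
    Commute (ρ i) (ρ j) := by
  rcases lt_or_ge j r with hjr | hjr
  · exact hA.commute i (by simp only [mem_Iio]; omega) j hjr hij
  rcases le_or_gt r i with hir | hir
  · exact hB.commute i ⟨hir, by omega⟩ j ⟨hjr, hj⟩ hij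
  have hiA : ρ i ∈ closure (ρ '' Iio r) := subset_closure ⟨i, hir, rfl⟩
  have hjB : ρ j ∈ closure (ρ '' Ico r n) := subset_closure ⟨j, ⟨hjr, hj⟩, rfl⟩
  by_cases hi : i = r - 1
  · refine commute_of_mem_movingSubgroup (hA.attachedAt.closure_le hiA)
      (hB.attachedAt.mem_movingSubgroup_diff hjB (hB.apply_eq_of_ne j ⟨hjr, hj⟩ (by omega)))
      (disjoint_diff_singleton_left (inter_comm U V ▸ hUV)).symm
  · exact commute_of_mem_movingSubgroup
      (hA.attachedAt.mem_movingSubgroup_diff hiA (hA.apply_eq_of_ne i hir hi))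
      (hB.attachedAt.closure_le hjB) (disjoint_diff_singleton_left hUV)

theorem closure_Icc_inf_le_glue [Finite Ω] (hUV : U ∩ V = {p})
    (hA : IsGluingSide ρ (Iio r) (r - 1) p U) (hB : IsGluingSide ρ (Ico r n) r p V) {a b : ℕ}
    (ha : a < r) (hb : r ≤ b + 1) (hbn : b + 1 < n) :
    closure (ρ '' Icc a b) ⊓ closure (ρ '' Icc (a + 1) (b + 1)) ≤
      closure (ρ '' Icc (a + 1) b) := by
  have hsplit : ∀ x y, x ≤ r → r ≤ y + 1 → Icc x y = Ico x r ∪ Icc r y := fun x y h₁ h₂ ↦ by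
    ext i
    simp only [mem_union, mem_Icc, mem_Ico]
    omega
  rw [hsplit a b ha.le hb, hsplit (a + 1) (b + 1) ha (by omega), hsplit (a + 1) b ha hb,
    image_union, image_union, image_union]
  exact closure_union_inf_closure_union_le hUV
    (hA.attachedAt.mono (image_mono Ico_subset_Iio_self))
    (hB.attachedAt.mono (image_mono (Icc_subset_Ico_right hbn)))
    (image_mono (Ico_subset_Ico_left a.le_succ)) (image_mono (Icc_subset_Icc_right b.le_succ))

theorem intersectionPropertyOn_glue [Finite Ω] (hUV : U ∩ V = {p})
    (hA : IsGluingSide ρ (Iio r) (r - 1) p U) (hB : IsGluingSide ρ (Ico r n) r p V) :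
    IntersectionPropertyOn ρ (Iio n) := by
  have hside : ∀ a d, a + d < r ∨ r ≤ a → a + d < n →
      IntersectionPropertyOn ρ (Icc a (a + d)) := by
    rintro a d (h | h) hn
    · exact hA.intersectionPropertyOn.mono fun i hi ↦ by
        simp only [mem_Icc, mem_Iio] at hi ⊢; omega
    · exact hB.intersectionPropertyOn.mono fun i hi ↦ by
        simp only [mem_Icc, mem_Ico] at hi ⊢; omega
  have hIcc : ∀ d a, a + d < n → IntersectionPropertyOn ρ (Icc a (a + d)) := by
    intro d
    induction d with
    | zero => exact fun a ha ↦ hside a 0 (by omega) ha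
    | succ d ih =>
      intro a ha
      by_cases h : a + (d + 1) < r ∨ r ≤ a
      · exact hside a (d + 1) h ha
      rw [← add_assoc]
      refine intersectionPropertyOn_Icc_succ (fun i _ j hj hij ↦ commute_glue hUV hA hB hij ?_)
        (ih a (by omega)) (by simpa only [add_right_comm] using ih (a + 1) (by omega))
        (closure_Icc_inf_le_glue hUV hA hB (by omega) (by omega) (by omega))
      simp only [mem_Icc] at hj
      omega
  rcases n with _ | n
  · exact hA.intersectionPropertyOn.mono fun i hi ↦ absurd hi (Nat.not_lt_zero i)
  · exact (hIcc n 0 (by omega)).mono fun i hi ↦ by simp only [mem_Iio, mem_Icc] at hi ⊢; omega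

theorem sq_eq_one_glue (hA : IsGluingSide ρ (Iio r) (r - 1) p U)
    (hB : IsGluingSide ρ (Ico r n) r p V) {i : ℕ} (hi : i < n) : ρ i ^ 2 = 1 :=
  (lt_or_ge i r).elim (hA.sq_eq_one i) fun h ↦ hB.sq_eq_one i ⟨h, hi⟩

theorem mul_sq_eq_one_glue (hUV : U ∩ V = {p}) (hA : IsGluingSide ρ (Iio r) (r - 1) p U)
    (hB : IsGluingSide ρ (Ico r n) r p V) {i j : ℕ} (hi : i < n) (hj : j < n)
    (hij : i + 2 ≤ j ∨ j + 2 ≤ i) : (ρ i * ρ j) ^ 2 = 1 := by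
  have hc : Commute (ρ i) (ρ j) := hij.elim (fun h ↦ commute_glue hUV hA hB h hj)
    fun h ↦ (commute_glue hUV hA hB h hi).symm
  rw [hc.mul_pow, sq_eq_one_glue hA hB hi, sq_eq_one_glue hA hB hj, one_mul]

end IsGluingSide

end GluedFamily

section Transport

variable {α Ω : Type*} [DecidableEq α] [DecidableEq Ω]

theorem viaEmbedding_swap (ι : α ↪ Ω) (a b : α) :
    (swap a b).viaEmbedding ι = swap (ι a) (ι b) := by
  ext x
  by_cases hx : x ∈ range ι
  · obtain ⟨c, rfl⟩ := hx
    rw [viaEmbedding_apply, ι.injective.swap_apply]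
  · rw [viaEmbedding_apply_of_notMem _ _ _ hx, swap_apply_of_ne_of_ne
      (fun h ↦ hx ⟨a, h.symm⟩) (fun h ↦ hx ⟨b, h.symm⟩)]

theorem FixesOrSwaps.viaEmbedding {p : α} {g : Perm α} (h : FixesOrSwaps p g) (ι : α ↪ Ω) :
    FixesOrSwaps (ι p) (g.viaEmbedding ι) := by
  rcases h with h | ⟨q, rfl⟩
  · exact Or.inl (by rw [viaEmbedding_apply, h])
  · exact Or.inr ⟨ι q, viaEmbedding_swap ι p q⟩

theorem fixesOrSwaps_of_eq_swap {r : ℕ} {σ : Fin r → Perm α} {p q : α} (hr : 1 ≤ r)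
    (hσ0 : σ ⟨0, hr⟩ = swap p q) (hσfix : ∀ j : Fin r, 1 ≤ (j : ℕ) → σ j p = p) (j : Fin r) :
    FixesOrSwaps p (σ j) := by
  rcases Nat.eq_zero_or_pos j with h | h
  · exact Or.inr ⟨q, (congrArg σ (Fin.ext h)).trans hσ0⟩
  · exact Or.inl (hσfix j h)

theorem commute_of_sq_eq_one {G : Type*} [Group G] {x y : G} (hx : x ^ 2 = 1) (hy : y ^ 2 = 1)
    (hxy : (x * y) ^ 2 = 1) : Commute x y := by
  rw [sq, mul_eq_one_iff_eq_inv] at hx hy hxy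
  rw [Commute, SemiconjBy, hxy, mul_inv_rev, ← hx, ← hy]

theorem isGluingSide_range {m : ℕ} {σ : Fin m → Perm α} {ι : α ↪ Ω} {e : Fin m → ℕ}
    {ρ : ℕ → Perm Ω} {p : α} (j₀ : Fin m) (hσinv : ∀ j, orderOf (σ j) = 2)
    (hσstring : ∀ j k : Fin m, (j : ℕ) + 2 ≤ k ∨ (k : ℕ) + 2 ≤ j → (σ j * σ k) ^ 2 = 1)
    (hσIP : ∀ I J : Set (Fin m),
      closure (σ '' I) ⊓ closure (σ '' J) = closure (σ '' (I ∩ J)))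
    (hσ : ∀ j, FixesOrSwaps p (σ j)) (hσfix : ∀ j, j ≠ j₀ → σ j p = p)
    (he : Function.Injective e) (hgap : ∀ j k, e j + 2 ≤ e k → (j : ℕ) + 2 ≤ k ∨ (k : ℕ) + 2 ≤ j)
    (hρ : ∀ j, ρ (e j) = (σ j).viaEmbedding ι) :
    IsGluingSide ρ (range e) (e j₀) (ι p) (range ι) where
  attachedAt := by
    refine ⟨?_, ?_⟩ <;> rintro _ ⟨_, ⟨j, rfl⟩, rfl⟩ <;> rw [hρ]
    exacts [viaEmbedding_mem_movingSubgroup _ _, (hσ j).viaEmbedding ι]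
  apply_eq_of_ne := by
    rintro _ ⟨j, rfl⟩ hj
    rw [hρ, viaEmbedding_apply, hσfix j (fun h ↦ hj (h ▸ rfl))]
  sq_eq_one := by
    rintro _ ⟨j, rfl⟩
    rw [hρ, ← viaEmbeddingHom_apply, ← map_pow, ← hσinv j, pow_orderOf_eq_one, map_one]
  commute := by
    rintro _ ⟨j, rfl⟩ _ ⟨k, rfl⟩ hjk
    rw [hρ, hρ, ← viaEmbeddingHom_apply, ← viaEmbeddingHom_apply]
    refine (commute_of_sq_eq_one ?_ ?_ (hσstring j k (hgap j k hjk))).map _ <;>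
      rw [← hσinv] <;> exact pow_orderOf_eq_one _
  intersectionPropertyOn := by
    have hρσ : ρ ∘ e = viaEmbeddingHom ι ∘ σ := funext hρ
    rw [← image_univ, intersectionPropertyOn_image_iff he.injOn, hρσ]
    exact IntersectionPropertyOn.map (fun I J _ _ ↦ (hσIP I J).le) (viaEmbeddingHom_injective ι)

theorem isGluingSide_Iio {r : ℕ} {σ : Fin r → Perm α} {ι : α ↪ Ω} {ρ : ℕ → Perm Ω} {p q : α}
    (hr : 1 ≤ r) (hσinv : ∀ j, orderOf (σ j) = 2)
    (hσstring : ∀ j k : Fin r, (j : ℕ) + 2 ≤ k ∨ (k : ℕ) + 2 ≤ j → (σ j * σ k) ^ 2 = 1)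
    (hσIP : ∀ I J : Set (Fin r),
      closure (σ '' I) ⊓ closure (σ '' J) = closure (σ '' (I ∩ J)))
    (hσ0 : σ ⟨0, hr⟩ = swap p q) (hσfix : ∀ j : Fin r, 1 ≤ (j : ℕ) → σ j p = p)
    (hρ : ∀ j : Fin r, ρ (r - 1 - j) = (σ j).viaEmbedding ι) :
    IsGluingSide ρ (Iio r) (r - 1) (ι p) (range ι) := by
  have hrange : range (fun j : Fin r ↦ r - 1 - (j : ℕ)) = Iio r := by
    ext i
    refine ⟨?_, fun hi ↦ ⟨⟨r - 1 - i, by omega⟩, ?_⟩⟩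
    · rintro ⟨j, rfl⟩
      exact mem_Iio.2 (by simp only; omega)
    · simp only [mem_Iio] at hi ⊢
      omega
  rw [← hrange]
  exact isGluingSide_range ⟨0, hr⟩ hσinv hσstring hσIP (fixesOrSwaps_of_eq_swap hr hσ0 hσfix)
    (fun j hj ↦ hσfix j (Nat.one_le_iff_ne_zero.2 fun h ↦ hj (Fin.ext h)))
    (fun j k h ↦ Fin.ext (by omega)) (fun j k h ↦ by omega) hρ

theorem isGluingSide_Ico {r s : ℕ} {τ : Fin s → Perm α} {ι : α ↪ Ω} {ρ : ℕ → Perm Ω} {p q : α}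
    (hs : 1 ≤ s) (hτinv : ∀ j, orderOf (τ j) = 2)
    (hτstring : ∀ j k : Fin s, (j : ℕ) + 2 ≤ k ∨ (k : ℕ) + 2 ≤ j → (τ j * τ k) ^ 2 = 1)
    (hτIP : ∀ I J : Set (Fin s),
      closure (τ '' I) ⊓ closure (τ '' J) = closure (τ '' (I ∩ J)))
    (hτ0 : τ ⟨0, hs⟩ = swap p q) (hτfix : ∀ j : Fin s, 1 ≤ (j : ℕ) → τ j p = p)
    (hρ : ∀ j : Fin s, ρ (r + j) = (τ j).viaEmbedding ι) :
    IsGluingSide ρ (Ico r (r + s)) r (ι p) (range ι) := by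
  have hrange : range (fun j : Fin s ↦ r + (j : ℕ)) = Ico r (r + s) := by
    ext i
    refine ⟨?_, fun hi ↦ ⟨⟨i - r, by simp only [mem_Ico] at hi; omega⟩, ?_⟩⟩
    · rintro ⟨j, rfl⟩
      exact mem_Ico.2 ⟨by simp only; omega, by simp only; omega⟩
    · simp only [mem_Ico] at hi ⊢
      omega
  rw [← hrange]
  exact isGluingSide_range ⟨0, hs⟩ hτinv hτstring hτIP (fixesOrSwaps_of_eq_swap hs hτ0 hτfix)
    (fun j hj ↦ hτfix j (Nat.one_le_iff_ne_zero.2 fun h ↦ hj (Fin.ext h)))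
    (fun j k h ↦ Fin.ext (by omega)) (fun j k h ↦ by omega) hρ

end Transport

theorem range_optionMap_inl_inter_range_optionMap_inr {X Y : Type*} :
    range (Option.map (Sum.inl : X → X ⊕ Y)) ∩ range (Option.map Sum.inr) = {none} := by
  ext (_ | _ | _) <;> simp

/-- The gluing theorem: gluing two string C-group representations (each having a
distinguished point `none` moved only by the first generator, which is a transposition)
at that point, reversing the indices of the first family, yields a string C-group
representation on `Option (X ⊕ Y)`. -/
theorem gluing_string_C_groups
    {X Y : Type*} [Fintype X] [Fintype Y] [DecidableEq X] [DecidableEq Y]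
    (r s : ℕ) (hr : 1 ≤ r) (hs : 1 ≤ s)
    (σ : Fin r → Equiv.Perm (Option X)) (τ : Fin s → Equiv.Perm (Option Y))
    (hσinv : ∀ j : Fin r, orderOf (σ j) = 2)
    (hσstring : ∀ j k : Fin r, (j : ℕ) + 2 ≤ (k : ℕ) ∨ (k : ℕ) + 2 ≤ (j : ℕ) →
      (σ j * σ k) ^ 2 = 1)
    (hσIP : ∀ I J : Set (Fin r),
      Subgroup.closure (σ '' I) ⊓ Subgroup.closure (σ '' J) = Subgroup.closure (σ '' (I ∩ J)))
    (x₀ : X) (hσ0 : σ ⟨0, hr⟩ = Equiv.swap none (some x₀))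
    (hσfix : ∀ j : Fin r, 1 ≤ (j : ℕ) → σ j none = none)
    (hτinv : ∀ j : Fin s, orderOf (τ j) = 2)
    (hτstring : ∀ j k : Fin s, (j : ℕ) + 2 ≤ (k : ℕ) ∨ (k : ℕ) + 2 ≤ (j : ℕ) →
      (τ j * τ k) ^ 2 = 1)
    (hτIP : ∀ I J : Set (Fin s),
      Subgroup.closure (τ '' I) ⊓ Subgroup.closure (τ '' J) = Subgroup.closure (τ '' (I ∩ J)))
    (y₀ : Y) (hτ0 : τ ⟨0, hs⟩ = Equiv.swap none (some y₀))
    (hτfix : ∀ j : Fin s, 1 ≤ (j : ℕ) → τ j none = none)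
    (f₁ : Option X ↪ Option (X ⊕ Y)) (hf₁ : ∀ o : Option X, f₁ o = Option.map Sum.inl o)
    (f₂ : Option Y ↪ Option (X ⊕ Y)) (hf₂ : ∀ o : Option Y, f₂ o = Option.map Sum.inr o)
    (θ : Fin (r + s) → Equiv.Perm (Option (X ⊕ Y)))
    (hθ₁ : ∀ k : Fin (r + s), ∀ hk : (k : ℕ) < r,
      θ k = (σ ⟨r - 1 - (k : ℕ), by omega⟩).viaEmbedding f₁)
    (hθ₂ : ∀ k : Fin (r + s), ∀ hk : r ≤ (k : ℕ),
      θ k = (τ ⟨(k : ℕ) - r, by have := k.isLt; omega⟩).viaEmbedding f₂) :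
    (∀ j k : Fin (r + s), (j : ℕ) + 2 ≤ (k : ℕ) ∨ (k : ℕ) + 2 ≤ (j : ℕ) →
      (θ j * θ k) ^ 2 = 1) ∧
    (∀ I J : Set (Fin (r + s)),
      Subgroup.closure (θ '' I) ⊓ Subgroup.closure (θ '' J) =
        Subgroup.closure (θ '' (I ∩ J))) := by
  have hp₁ : f₁ none = none := by rw [hf₁]; rfl
  have hp₂ : f₂ none = none := by rw [hf₂]; rfl
  have hUV : range f₁ ∩ range f₂ = {none} := by
    rw [show ⇑f₁ = Option.map Sum.inl from funext hf₁,
      show ⇑f₂ = Option.map Sum.inr from funext hf₂]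
    exact range_optionMap_inl_inter_range_optionMap_inr
  set ρ : ℕ → Perm (Option (X ⊕ Y)) := fun i ↦ if h : i < r + s then θ ⟨i, h⟩ else 1
  have hθρ : ∀ k : Fin (r + s), θ k = ρ k := fun k ↦ by simp only [ρ, dif_pos k.isLt]
  have hA : IsGluingSide ρ (Iio r) (r - 1) none (range f₁) := by
    refine hp₁ ▸ isGluingSide_Iio hr hσinv hσstring hσIP hσ0 hσfix fun j ↦ ?_
    refine (hθρ ⟨r - 1 - j, by omega⟩).symm.trans ((hθ₁ _ (by simp only; omega)).trans ?_)
    exact congrArg (fun j ↦ (σ j).viaEmbedding f₁) (Fin.ext (by simp only; omega))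
  have hB : IsGluingSide ρ (Ico r (r + s)) r none (range f₂) := by
    refine hp₂ ▸ isGluingSide_Ico hs hτinv hτstring hτIP hτ0 hτfix fun j ↦ ?_
    refine (hθρ ⟨r + j, by omega⟩).symm.trans ((hθ₂ _ (by simp only; omega)).trans ?_)
    exact congrArg (fun j ↦ (τ j).viaEmbedding f₂) (Fin.ext (by simp only; omega))
  refine ⟨fun j k hjk ↦ ?_, fun I J ↦ ?_⟩
  · rw [hθρ, hθρ]
    exact hA.mul_sq_eq_one_glue hUV hB j.isLt k.isLt hjk
  · have hIP := (hA.intersectionPropertyOn_glue hUV hB).mono (range_subset_iff.2 Fin.isLt)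
    rw [← image_univ, intersectionPropertyOn_image_iff Fin.val_injective.injOn] at hIP
    rw [show θ = ρ ∘ Fin.val from funext hθρ]
    exact hIP.closure_inf_eq (subset_univ I) (subset_univ J)
end

section
/- For every integer r ≥ 1, the family of adjacent transpositions ρᵢ := (i i+1) ∈ Sym(Fin (r+1)), for 0 ≤ i ≤ r−1, is a string C-group representation of the full symmetric group: the ρᵢ are involutions generating Sym(Fin (r+1)) (⟨ρ₀,…,ρ_{r−1}⟩ = ⊤), they satisfy the string property, and they satisfy the intersection property. -/
/-!
Cutting `Fin (r + 1)` between `k` and `k + 1` for every `k ∉ I` splits it into intervals, the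
`I`-blocks. Each `(i i+1)` with `i ∈ I` preserves every block, and conversely any two points of a
block are joined by a chain of such transpositions. Since a group generated by transpositions
consists exactly of the permutations preserving its orbits, `⟨ρᵢ : i ∈ I⟩` is the stabilizer of
the `I`-blocks. Being in the same `(I ∩ J)`-block means being in the same `I`-block and in the
same `J`-block, which gives the intersection property.
-/

open Equiv MulAction

variable {r : ℕ}

def adjSwap (i : Fin r) : Perm (Fin (r + 1)) :=
  swap i.castSucc i.succ

theorem isSwap_adjSwap (i : Fin r) : (adjSwap i).IsSwap :=
  ⟨_, _, Fin.castSucc_lt_succ.ne, rfl⟩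

theorem adjSwap_disjoint {i j : Fin r} (h : (i : ℕ) + 2 ≤ j ∨ (j : ℕ) + 2 ≤ i) :
    (adjSwap i).Disjoint (adjSwap j) := by
  apply Perm.disjoint_swap_swap
  simp only [List.nodup_cons, List.nodup_nil, List.mem_cons, List.not_mem_nil, or_false,
    not_false_eq_true, and_true, Fin.ext_iff, Fin.val_castSucc, Fin.val_succ]
  omega

theorem adjSwap_le_castSucc_iff {i k : Fin r} (hik : i ≠ k) (x : Fin (r + 1)) :
    adjSwap i x ≤ k.castSucc ↔ x ≤ k.castSucc := by
  have hcut : i.succ ≤ k.castSucc ↔ i.castSucc ≤ k.castSucc := by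
    rw [Fin.succ_le_castSucc_iff, Fin.castSucc_le_castSucc_iff, lt_iff_le_and_ne, and_iff_left hik]
  unfold adjSwap
  rcases eq_or_ne x i.castSucc with rfl | h₁
  · rw [swap_apply_left, hcut]
  rcases eq_or_ne x i.succ with rfl | h₂
  · rw [swap_apply_right, hcut]
  · rw [swap_apply_of_ne_of_ne h₁ h₂]

/-- `x` and `y` lie in the same `I`-block: no cut `k ∉ I`, between `k` and `k + 1`, separates
them. -/
def SameBlock (I : Set (Fin r)) (x y : Fin (r + 1)) : Prop :=
  ∀ k ∉ I, (x ≤ k.castSucc ↔ y ≤ k.castSucc)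

namespace SameBlock

variable {I J : Set (Fin r)} {x y z : Fin (r + 1)}

@[refl] theorem refl (I : Set (Fin r)) (x : Fin (r + 1)) : SameBlock I x x :=
  fun _ _ => Iff.rfl

@[symm] theorem symm (h : SameBlock I x y) : SameBlock I y x :=
  fun k hk => (h k hk).symm

theorem trans (h₁ : SameBlock I x y) (h₂ : SameBlock I y z) : SameBlock I x z :=
  fun k hk => (h₁ k hk).trans (h₂ k hk)

theorem univ (x y : Fin (r + 1)) : SameBlock Set.univ x y :=
  fun _ hk => absurd (Set.mem_univ _) hk

theorem inter_iff : SameBlock (I ∩ J) x y ↔ SameBlock I x y ∧ SameBlock J x y := by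
  simp only [SameBlock, Set.mem_inter_iff, not_and_or, or_imp, forall_and]

end SameBlock

theorem sameBlock_adjSwap {I : Set (Fin r)} {i : Fin r} (hi : i ∈ I) (x : Fin (r + 1)) :
    SameBlock I x (adjSwap i x) :=
  fun _ hk => (adjSwap_le_castSucc_iff (ne_of_mem_of_not_mem hi hk) x).symm

def blockStabilizer (I : Set (Fin r)) : Subgroup (Perm (Fin (r + 1))) where
  carrier := {g | ∀ x, SameBlock I x (g x)}
  one_mem' := SameBlock.refl I
  mul_mem' hg hh x := (hh x).trans (hg _)
  inv_mem' {g} hg x := by simpa using (hg (g⁻¹ x)).symm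

theorem mem_blockStabilizer {I : Set (Fin r)} {g : Perm (Fin (r + 1))} :
    g ∈ blockStabilizer I ↔ ∀ x, SameBlock I x (g x) :=
  Iff.rfl

theorem blockStabilizer_univ : blockStabilizer (Set.univ : Set (Fin r)) = ⊤ :=
  eq_top_iff.2 fun _ _ _ => SameBlock.univ _ _

theorem blockStabilizer_inf (I J : Set (Fin r)) :
    blockStabilizer I ⊓ blockStabilizer J = blockStabilizer (I ∩ J) := by
  ext g
  simp only [Subgroup.mem_inf, mem_blockStabilizer, SameBlock.inter_iff, forall_and]

theorem closure_adjSwap_le_blockStabilizer (I : Set (Fin r)) :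
    Subgroup.closure (adjSwap '' I) ≤ blockStabilizer I :=
  (Subgroup.closure_le _).2 fun _ ⟨_, hi, hg⟩ => hg ▸ sameBlock_adjSwap hi

theorem mem_orbit_closure_adjSwap_of_le {I : Set (Fin r)} {x y : Fin (r + 1)} (hxy : x ≤ y)
    (h : SameBlock I x y) : y ∈ orbit (Subgroup.closure (adjSwap '' I)) x := by
  induction y using Fin.induction with
  | zero => exact le_antisymm hxy (Fin.zero_le x) ▸ mem_orbit_self x
  | succ i ih =>
    rcases eq_or_lt_of_le hxy with rfl | hlt
    · exact mem_orbit_self _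
    have hxi : x ≤ i.castSucc := Fin.le_castSucc_iff.2 hlt
    have hi : i ∈ I := by_contra fun hi => Fin.castSucc_lt_succ.not_ge ((h i hi).1 hxi)
    have hstep : adjSwap i i.castSucc = i.succ := swap_apply_left _ _
    have hx : SameBlock I x i.castSucc := h.trans (hstep ▸ (sameBlock_adjSwap hi _).symm)
    have hsucc : i.succ ∈ orbit (Subgroup.closure (adjSwap '' I)) i.castSucc :=
      hstep ▸ ⟨⟨adjSwap i, Subgroup.subset_closure ⟨i, hi, rfl⟩⟩, rfl⟩
    exact orbit_eq_iff.2 (ih hxi hx) ▸ hsucc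

theorem mem_orbit_closure_adjSwap {I : Set (Fin r)} {x y : Fin (r + 1)} (h : SameBlock I x y) :
    y ∈ orbit (Subgroup.closure (adjSwap '' I)) x := by
  rcases le_total x y with hxy | hyx
  · exact mem_orbit_closure_adjSwap_of_le hxy h
  · exact mem_orbit_symm.1 (mem_orbit_closure_adjSwap_of_le hyx h.symm)

theorem closure_adjSwap_eq_blockStabilizer (I : Set (Fin r)) :
    Subgroup.closure (adjSwap '' I) = blockStabilizer I := by
  refine le_antisymm (closure_adjSwap_le_blockStabilizer I) fun g hg => ?_
  have hswap : ∀ σ ∈ adjSwap '' I, σ.IsSwap := by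
    rintro _ ⟨i, -, rfl⟩
    exact isSwap_adjSwap i
  rw [mem_closure_isSwap hswap]
  exact ⟨Set.toFinite _, fun x => mem_orbit_closure_adjSwap (hg x)⟩

theorem simplex_is_string_C_group_general
    (r : ℕ) (ρ : Fin r → Equiv.Perm (Fin (r + 1)))
    (hρ : ∀ i : Fin r, ρ i = Equiv.swap i.castSucc i.succ) :
    (∀ i : Fin r, orderOf (ρ i) = 2) ∧
    Subgroup.closure (Set.range ρ) = (⊤ : Subgroup (Equiv.Perm (Fin (r + 1)))) ∧
    (∀ i j : Fin r, (i : ℕ) + 2 ≤ (j : ℕ) ∨ (j : ℕ) + 2 ≤ (i : ℕ) →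
      (ρ i * ρ j) ^ 2 = 1) ∧
    (∀ I J : Set (Fin r),
      Subgroup.closure (ρ '' I) ⊓ Subgroup.closure (ρ '' J) =
        Subgroup.closure (ρ '' (I ∩ J))) := by
  obtain rfl : ρ = adjSwap := funext hρ
  refine ⟨fun i => (isSwap_adjSwap i).orderOf, ?_, fun i j hij => ?_, fun I J => ?_⟩
  · rw [← Set.image_univ, closure_adjSwap_eq_blockStabilizer, blockStabilizer_univ]
  · rw [(adjSwap_disjoint hij).commute.mul_pow, sq, sq, adjSwap, adjSwap, swap_mul_self,
      swap_mul_self, one_mul]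
  · simp only [closure_adjSwap_eq_blockStabilizer, blockStabilizer_inf]

/-- The adjacent transpositions `(i, i+1)` form a string C-group representation of the
full symmetric group `Sym(Fin (r+1))`. -/
theorem simplex_is_string_C_group
    (r : ℕ) (hr : 1 ≤ r) (ρ : Fin r → Equiv.Perm (Fin (r + 1)))
    (hρ : ∀ i : Fin r, ρ i = Equiv.swap i.castSucc i.succ) :
    (∀ i : Fin r, orderOf (ρ i) = 2) ∧
    Subgroup.closure (Set.range ρ) = (⊤ : Subgroup (Equiv.Perm (Fin (r + 1)))) ∧
    (∀ i j : Fin r, (i : ℕ) + 2 ≤ (j : ℕ) ∨ (j : ℕ) + 2 ≤ (i : ℕ) →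
      (ρ i * ρ j) ^ 2 = 1) ∧
    (∀ I J : Set (Fin r),
      Subgroup.closure (ρ '' I) ⊓ Subgroup.closure (ρ '' J) =
        Subgroup.closure (ρ '' (I ∩ J))) :=
  simplex_is_string_C_group_general r ρ hρ
end

section
/- Let k ≥ 1 and r ≥ 1 be integers. On the set Fin k × Fin (r+1), define for each 0 ≤ i ≤ r−1 the involution ρᵢ ∈ Sym(Fin k × Fin (r+1)) by ρᵢ(j, x) := (j, (i i+1)(x)) (i.e. ρᵢ = Equiv.prodCongr (Equiv.refl (Fin k)) (Equiv.swap i (i+1)), the simultaneous adjacent transposition on every copy). Then the family (ρ₀,…,ρ_{r−1}) satisfies the string property and the intersection property, and the subgroup ⟨ρ₀,…,ρ_{r−1}⟩ is isomorphic as a group to Sym(Fin (r+1)). -/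
/-!
The diagonal embedding `e ↦ id × e` of `Sym(Fin (r+1))` into `Sym(Fin k × Fin (r+1))` is injective
for `k ≥ 1` and sends the adjacent transposition `(i i+1)` to `ρᵢ`. Injective homomorphisms carry
over the string property, the intersection property and the isomorphism type of the generated
group, so it suffices to treat the adjacent transpositions of `Sym(Fin (r+1))`. Distant ones are
disjoint, hence commute, and all of them generate `Sym(Fin (r+1))`. The subgroup generated by
`{(i i+1) : i ∈ I}` is the stabiliser of the blocks of the path `0 — 1 — ⋯ — r` left after deleting
the edges outside `I`: a subgroup generated by transpositions contains exactly the permutations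
moving each point within its orbit. Block stabilisers satisfy `B(I) ∩ B(J) = B(I ∩ J)` directly.
-/

open Equiv Subgroup MulAction Function

section

variable {ι G H : Type*} [Group G] [Group H]

def HasIntersectionProperty (s : ι → G) : Prop :=
  ∀ I J : Set ι, closure (s '' I) ⊓ closure (s '' J) = closure (s '' (I ∩ J))

theorem HasIntersectionProperty.comp {s : ι → G} (hs : HasIntersectionProperty s)
    {f : G →* H} (hf : Injective f) : HasIntersectionProperty (f ∘ s) := by
  intro I J
  simp only [Set.image_comp, ← MonoidHom.map_closure, ← map_inf _ _ _ hf, hs I J]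

theorem nonempty_mulEquiv_closure_range_comp {s : ι → G} (hs : closure (Set.range s) = ⊤)
    {f : G →* H} (hf : Injective f) : Nonempty (closure (Set.range (f ∘ s)) ≃* G) := by
  have h : closure (Set.range (f ∘ s)) = (⊤ : Subgroup G).map f := by
    rw [Set.range_comp, ← MonoidHom.map_closure, hs]
  exact ⟨(MulEquiv.subgroupCongr h).trans
    ((equivMapOfInjective ⊤ f hf).symm.trans topEquiv)⟩

end

namespace Equiv.Perm

@[simps]
def diagonalHom (α β : Type*) : Perm β →* Perm (α × β) where
  toFun e := (Equiv.refl α).prodCongr e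
  map_one' := rfl
  map_mul' _ _ := rfl

theorem diagonalHom_injective (α β : Type*) [Nonempty α] : Injective (diagonalHom α β) := by
  intro e e' h
  ext y
  inhabit α
  simpa using congr($h (default, y))

variable {n : ℕ}

def adjSwap (i : Fin n) : Perm (Fin (n + 1)) := swap i.castSucc i.succ

theorem adjSwap_mul_adjSwap_sq {i j : Fin n} (h : (i : ℕ) + 2 ≤ j ∨ (j : ℕ) + 2 ≤ i) :
    (adjSwap i * adjSwap j) ^ 2 = 1 := by
  have hdisj : (adjSwap i).Disjoint (adjSwap j) := by
    apply disjoint_swap_swap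
    simp only [List.nodup_cons, List.mem_cons, List.not_mem_nil, List.nodup_nil, or_false,
      not_false_eq_true, and_true, Fin.ext_iff, Fin.val_succ, Fin.val_castSucc]
    omega
  rw [hdisj.commute.mul_pow, sq, sq, adjSwap, adjSwap, swap_mul_self, swap_mul_self, one_mul]

/-- Deleting the edges `m — m+1`, `m ∉ I`, from the path `0 — 1 — ⋯ — n` leaves intervals
("blocks"); a permutation maps every block to itself iff it preserves each initial segment
`[0, m]` with `m ∉ I`. -/
def blockStabilizer (I : Set (Fin n)) : Subgroup (Perm (Fin (n + 1))) where
  carrier := {g | ∀ m ∉ I, ∀ x, g x ≤ m.castSucc ↔ x ≤ m.castSucc}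
  one_mem' _ _ _ := Iff.rfl
  mul_mem' hg hh m hm x := (hg m hm _).trans (hh m hm x)
  inv_mem' {g} hg m hm x := by simpa using (hg m hm (g⁻¹ x)).symm

theorem blockStabilizer_inf (I J : Set (Fin n)) :
    blockStabilizer I ⊓ blockStabilizer J = blockStabilizer (I ∩ J) := by
  ext g
  refine ⟨fun ⟨hI, hJ⟩ m hm => ?_, fun h => ⟨fun m hm => h m (hm ·.1), fun m hm => h m (hm ·.2)⟩⟩
  rcases not_and_or.mp hm with hm | hm
  exacts [hI m hm, hJ m hm]

theorem adjSwap_mem_blockStabilizer {I : Set (Fin n)} {i : Fin n} (hi : i ∈ I) :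
    adjSwap i ∈ blockStabilizer I := by
  intro m hm x
  have hmi : (m : ℕ) ≠ i := fun h => hm (Fin.ext h ▸ hi)
  simp only [adjSwap, swap_apply_def]
  split_ifs <;> subst_vars <;> simp only [Fin.le_def, Fin.val_succ, Fin.val_castSucc] <;> omega

theorem mem_orbit_closure_adjSwap {I : Set (Fin n)} {x y : Fin (n + 1)} (hxy : x ≤ y)
    (h : ∀ m : Fin n, x ≤ m.castSucc → m.succ ≤ y → m ∈ I) :
    y ∈ orbit (closure (adjSwap '' I)) x := by
  induction y using Fin.induction with
  | zero => rw [Fin.le_zero_iff.mp hxy]; exact mem_orbit_self _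
  | succ i ih =>
    obtain rfl | hlt := hxy.eq_or_lt
    · exact mem_orbit_self _
    have hx : x ≤ i.castSucc := Fin.le_castSucc_iff.mpr hlt
    have hi : adjSwap i ∈ closure (adjSwap '' I) := subset_closure ⟨i, h i hx le_rfl, rfl⟩
    have hcs := ih hx fun m hxm hmi => h m hxm (hmi.trans (Fin.castSucc_le_succ i))
    simpa [adjSwap] using mem_orbit_of_mem_orbit (⟨_, hi⟩ : closure (adjSwap '' I)) hcs

theorem apply_mem_orbit_closure_adjSwap {I : Set (Fin n)} {g : Perm (Fin (n + 1))}
    (hg : g ∈ blockStabilizer I) (x : Fin (n + 1)) :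
    g x ∈ orbit (closure (adjSwap '' I)) x := by
  have key : ∀ y z, (∀ m ∉ I, y ≤ m.castSucc ↔ z ≤ m.castSucc) → y ≤ z →
      z ∈ orbit (closure (adjSwap '' I)) y := by
    refine fun y z hyz hle => mem_orbit_closure_adjSwap hle fun m hym hmz => ?_
    by_contra hm
    exact absurd ((hyz m hm).mp hym) (not_le.mpr (Fin.castSucc_lt_iff_succ_le.mpr hmz))
  rcases le_total x (g x) with hle | hle
  · exact key x (g x) (fun m hm => (hg m hm x).symm) hle
  · exact mem_orbit_symm.mp (key (g x) x (hg · · x) hle)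

theorem closure_image_adjSwap (I : Set (Fin n)) :
    closure (adjSwap '' I) = blockStabilizer I := by
  refine le_antisymm (closure_le _ |>.mpr ?_) fun g hg => ?_
  · rintro _ ⟨i, hi, rfl⟩
    exact adjSwap_mem_blockStabilizer hi
  · refine (mem_closure_isSwap ?_).mpr ⟨Set.toFinite _, apply_mem_orbit_closure_adjSwap hg⟩
    rintro _ ⟨i, -, rfl⟩
    exact ⟨_, _, Fin.castSucc_lt_succ.ne, rfl⟩

theorem hasIntersectionProperty_adjSwap : HasIntersectionProperty (adjSwap (n := n)) := by
  intro I J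
  simp only [closure_image_adjSwap, blockStabilizer_inf]

theorem closure_range_adjSwap : closure (Set.range (adjSwap (n := n))) = ⊤ :=
  closure_eq_top_of_mclosure_eq_top (mclosure_swap_castSucc_succ n)

end Equiv.Perm

theorem union_of_identical_simplexes_is_string_C_group_general
    (k r : ℕ) (hk : 1 ≤ k)
    (ρ : Fin r → Equiv.Perm (Fin k × Fin (r + 1)))
    (hρ : ∀ i : Fin r,
      ρ i = Equiv.prodCongr (Equiv.refl (Fin k)) (Equiv.swap i.castSucc i.succ)) :
    (∀ i j : Fin r, (i : ℕ) + 2 ≤ (j : ℕ) ∨ (j : ℕ) + 2 ≤ (i : ℕ) →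
      (ρ i * ρ j) ^ 2 = 1) ∧
    (∀ I J : Set (Fin r),
      Subgroup.closure (ρ '' I) ⊓ Subgroup.closure (ρ '' J) =
        Subgroup.closure (ρ '' (I ∩ J))) ∧
    Nonempty (Subgroup.closure (Set.range ρ) ≃* Equiv.Perm (Fin (r + 1))) := by
  have : Nonempty (Fin k) := ⟨⟨0, hk⟩⟩
  obtain rfl : ρ = Perm.diagonalHom (Fin k) _ ∘ Perm.adjSwap := funext hρ
  have hinj := Perm.diagonalHom_injective (Fin k) (Fin (r + 1))
  refine ⟨fun i j hij => ?_, Perm.hasIntersectionProperty_adjSwap.comp hinj,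
    nonempty_mulEquiv_closure_range_comp Perm.closure_range_adjSwap hinj⟩
  simp only [comp_apply, ← map_mul, ← map_pow, Perm.adjSwap_mul_adjSwap_sq hij, map_one]

/-- A disjoint union of `k` identical `r`-simplexes is a CPR graph representing
`Sym(Fin (r+1))`: the simultaneous adjacent transpositions satisfy the string and
intersection properties and generate a group isomorphic to `Sym(Fin (r+1))`. -/
theorem union_of_identical_simplexes_is_string_C_group
    (k r : ℕ) (hk : 1 ≤ k) (hr : 1 ≤ r)
    (ρ : Fin r → Equiv.Perm (Fin k × Fin (r + 1)))
    (hρ : ∀ i : Fin r,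
      ρ i = Equiv.prodCongr (Equiv.refl (Fin k)) (Equiv.swap i.castSucc i.succ)) :
    (∀ i j : Fin r, (i : ℕ) + 2 ≤ (j : ℕ) ∨ (j : ℕ) + 2 ≤ (i : ℕ) →
      (ρ i * ρ j) ^ 2 = 1) ∧
    (∀ I J : Set (Fin r),
      Subgroup.closure (ρ '' I) ⊓ Subgroup.closure (ρ '' J) =
        Subgroup.closure (ρ '' (I ∩ J))) ∧
    Nonempty (Subgroup.closure (Set.range ρ) ≃* Equiv.Perm (Fin (r + 1))) :=
  union_of_identical_simplexes_is_string_C_group_general k r hk ρ hρ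
end

section
/- Let r ≥ 2 be an integer. On the set Fin r × Fin 2, define involutions ρ₀,…,ρ_{r−1} ∈ Sym(Fin r × Fin 2) by: ρ₀ := the transposition swapping (0,0) and (0,1); and for 1 ≤ i ≤ r−1, ρᵢ(x, ε) := ((i−1 i)(x), ε) (i.e. ρᵢ = Equiv.prodCongr (Equiv.swap (i−1) i) (Equiv.refl (Fin 2))). Then the family (ρ₀,…,ρ_{r−1}) satisfies the string property and the intersection property, and the generated subgroup is exactly the full stabilizer of the block system with blocks {x} × Fin 2: ⟨ρ₀,…,ρ_{r−1}⟩ = { σ ∈ Sym(Fin r × Fin 2) : ∃ π ∈ Sym(Fin r), ∀ x ε, (σ (x, ε)).1 = π x } (a group isomorphic to the wreath product C₂ ≀ S_r, of order 2^r · r!). -/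
/-!
Fix `I ⊆ Fin r`; for each `k ≥ 1` in `I` join the blocks `k - 1` and `k`, and if `0 ∈ I` also join
the two points of block `0`. Then `⟨ρᵢ : i ∈ I⟩` is exactly the group of block-preserving
permutations that keep every point in its connected component. For such a `σ` with block
permutation `π`, every block is connected to its image, so `π` lies in the Young subgroup generated
by the adjacent transpositions in `I` (a permutation lies in a group generated by transpositions iff
it maps every point into its orbit) and its lift to the blocks lies in `⟨ρᵢ : i ∈ I⟩`. What is left
is block-fixing, hence a product of flips of blocks connected to block `0`, and each such flip is a
conjugate of `ρ₀` by a lift. Components for `I ∩ J` are the intersections of those for `I` and `J`,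
which gives the intersection property; for `I = univ` everything is connected.
-/

open Equiv Set MulAction
open scoped Interval

namespace WreathString

section LinearOrder

variable {α : Type*} [LinearOrder α]

theorem uIoc_subset_uIoc_union_uIoc (a b c : α) : Ι a c ⊆ Ι a b ∪ Ι b c := by
  intro x
  simp only [mem_union, mem_uIoc]
  rcases le_total x b with h | h <;> grind

theorem uIoc_swap_apply_subset [DecidableEq α] (a b x : α) : Ι x (swap a b x) ⊆ Ι a b := by
  rw [swap_apply_def]
  split_ifs with ha hb
  · rw [ha]
  · rw [hb, uIoc_comm]
  · simp

theorem Iic_subset_of_uIoc_subset {I : Set α} {a b : α} (hab : Ι a b ⊆ I) (hb : Iic b ⊆ I) :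
    Iic a ⊆ I :=
  Iic_subset_Iic_union_Ioc.trans (union_subset hb (Ioc_subset_uIoc'.trans hab))

variable (β : Type*)

/-- Connectivity in the graph of the header, with blocks indexed by any linear order: the two
points of block `x` are connected, through the flip edge at the bottom, iff `Iic x ⊆ I`. -/
def chainSetoid (I : Set α) : Setoid (α × β) where
  r p q := Ι p.1 q.1 ⊆ I ∧ (p.2 = q.2 ∨ Iic p.1 ⊆ I)
  iseqv.refl p := ⟨by simp, .inl rfl⟩
  iseqv.symm := fun {p q} ⟨h, h'⟩ =>
    have h : Ι q.1 p.1 ⊆ I := uIoc_comm q.1 p.1 ▸ h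
    ⟨h, h'.imp Eq.symm (Iic_subset_of_uIoc_subset h)⟩
  iseqv.trans := fun {_ q _} ⟨hpq, hpq'⟩ ⟨hqs, hqs'⟩ =>
    ⟨(uIoc_subset_uIoc_union_uIoc _ q.1 _).trans (union_subset hpq hqs),
      hpq'.elim (fun h => hqs'.imp h.trans (Iic_subset_of_uIoc_subset hpq)) .inr⟩

@[simp]
theorem chainSetoid_iff {I : Set α} {p q : α × β} :
    chainSetoid β I p q ↔ Ι p.1 q.1 ⊆ I ∧ (p.2 = q.2 ∨ Iic p.1 ⊆ I) :=
  Iff.rfl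

theorem chainSetoid_inter (I J : Set α) :
    chainSetoid β (I ∩ J) = chainSetoid β I ⊓ chainSetoid β J := by
  ext p q
  simp only [Setoid.inf_iff_and, chainSetoid_iff, subset_inter_iff]
  tauto

theorem chainSetoid_univ : chainSetoid β (univ : Set α) = ⊤ := by
  ext p q
  simp [Setoid.top_def]

end LinearOrder

section Perm

variable {α β : Type*}

def classwiseStabilizer (s : Setoid α) : Subgroup (Perm α) where
  carrier := {σ | ∀ a, s a (σ a)}
  one_mem' := s.refl
  mul_mem' hσ hτ a := s.trans (hτ a) (hσ _)
  inv_mem' {σ} hσ a := by simpa using s.symm (hσ (σ⁻¹ a))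

theorem mem_classwiseStabilizer {s : Setoid α} {σ : Perm α} :
    σ ∈ classwiseStabilizer s ↔ ∀ a, s a (σ a) :=
  Iff.rfl

theorem classwiseStabilizer_inf (s t : Setoid α) :
    classwiseStabilizer (s ⊓ t) = classwiseStabilizer s ⊓ classwiseStabilizer t := by
  ext σ
  simp only [Subgroup.mem_inf, mem_classwiseStabilizer, ← forall_and]
  exact forall_congr' fun a => Setoid.inf_iff_and

theorem classwiseStabilizer_top : classwiseStabilizer (⊤ : Setoid α) = ⊤ := by
  ext σ
  simp [mem_classwiseStabilizer, Setoid.top_def]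

variable (α β) in
def blockwise : Subgroup (Perm (α × β)) where
  carrier := {σ | ∃ π : Perm α, ∀ p, (σ p).1 = π p.1}
  one_mem' := ⟨1, fun _ => rfl⟩
  mul_mem' := fun ⟨π, hπ⟩ ⟨π', hπ'⟩ => ⟨π * π', fun p => by simp [hπ, hπ']⟩
  inv_mem' := fun {σ} ⟨π, hπ⟩ =>
    ⟨π⁻¹, fun p => by rw [Perm.eq_inv_iff_eq, ← hπ]; simp⟩

theorem mem_blockwise {σ : Perm (α × β)} :
    σ ∈ blockwise α β ↔ ∃ π : Perm α, ∀ p, (σ p).1 = π p.1 :=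
  Iff.rfl

variable (β) in
def blockPerm : Perm α →* Perm (α × β) where
  toFun π := π.prodCongr (Equiv.refl β)
  map_one' := rfl
  map_mul' _ _ := rfl

@[simp]
theorem blockPerm_apply (π : Perm α) (p : α × β) : blockPerm β π p = (π p.1, p.2) :=
  rfl

theorem blockPerm_mem_blockwise (π : Perm α) : blockPerm β π ∈ blockwise α β :=
  ⟨π, fun _ => rfl⟩

variable [DecidableEq α]

def flipAt (x : α) : Perm (α × Fin 2) :=
  swap (x, 0) (x, 1)

theorem flipAt_isSwap (x : α) : (flipAt x).IsSwap :=
  ⟨_, _, by simp, rfl⟩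

@[simp]
theorem flipAt_apply_fst (x : α) (p : α × Fin 2) : (flipAt x p).1 = p.1 := by
  unfold flipAt
  rw [swap_apply_def]
  split_ifs <;> simp_all

theorem flipAt_mem_blockwise (x : α) : flipAt x ∈ blockwise α (Fin 2) :=
  ⟨1, flipAt_apply_fst x⟩

theorem blockPerm_mul_flipAt_mul_inv (π : Perm α) (x : α) :
    blockPerm (Fin 2) π * flipAt x * (blockPerm (Fin 2) π)⁻¹ = flipAt (π x) :=
  (swap_apply_apply (blockPerm (Fin 2) π) (x, 0) (x, 1)).symm

theorem eq_flipAt_apply_of_fst_eq {p q : α × Fin 2} (h₁ : q.1 = p.1) (h₂ : q.2 ≠ p.2) :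
    q = flipAt p.1 p := by
  obtain ⟨x, a⟩ := p
  obtain ⟨y, b⟩ := q
  obtain rfl : y = x := h₁
  fin_cases a <;> fin_cases b <;> simp_all [flipAt]

end Perm

section ChainPerm

variable {α : Type*} [LinearOrder α] {I : Set α}

theorem blockPerm_mem_classwiseStabilizer (β : Type*) {π : Perm α} (hπ : ∀ x, Ι x (π x) ⊆ I) :
    blockPerm β π ∈ classwiseStabilizer (chainSetoid β I) :=
  fun p => ⟨hπ p.1, .inl rfl⟩

theorem flipAt_mem_classwiseStabilizer {x : α} (hx : Iic x ⊆ I) :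
    flipAt x ∈ classwiseStabilizer (chainSetoid (Fin 2) I) := by
  intro p
  refine ⟨by simp, ?_⟩
  by_cases h : p.1 = x
  · exact .inr (h ▸ hx)
  · left
    rw [flipAt, swap_apply_of_ne_of_ne] <;> simp [Prod.ext_iff, h]

theorem mem_closure_flipAt [Finite α] {τ : Perm (α × Fin 2)}
    (hτ : τ ∈ classwiseStabilizer (chainSetoid (Fin 2) I)) (hfst : ∀ p, (τ p).1 = p.1) :
    τ ∈ Subgroup.closure (flipAt '' {x | Iic x ⊆ I}) := by
  rw [mem_closure_isSwap (by rintro _ ⟨x, -, rfl⟩; exact flipAt_isSwap x)]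
  refine ⟨toFinite _, fun p => ?_⟩
  by_cases h : (τ p).2 = p.2
  · rw [show τ p = p from Prod.ext (hfst p) h]
    exact mem_orbit_self p
  · have hflip : Iic p.1 ⊆ I := (hτ p).2.resolve_left (Ne.symm h)
    rw [eq_flipAt_apply_of_fst_eq (hfst p) h]
    exact ⟨⟨flipAt p.1, Subgroup.subset_closure (mem_image_of_mem _ hflip)⟩, rfl⟩

end ChainPerm

section Fin

variable {r : ℕ} {I : Set (Fin r)}

def edgeSwaps (I : Set (Fin r)) : Set (Perm (Fin r)) :=
  {σ | ∃ x y : Fin r, x.val + 1 = y.val ∧ y ∈ I ∧ swap x y = σ}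

theorem rel_of_uIoc_subset (s : Setoid (Fin r))
    (hs : ∀ x y : Fin r, x.val + 1 = y.val → y ∈ I → s x y) {x y : Fin r} (hxy : Ι x y ⊆ I) :
    s x y := by
  wlog hle : x ≤ y generalizing x y
  · exact s.symm (this (uIoc_comm x y ▸ hxy) (le_of_not_ge hle))
  rw [uIoc_of_le hle] at hxy
  obtain ⟨n, hn⟩ := Nat.exists_eq_add_of_le (Fin.le_def.1 hle)
  induction n generalizing y with
  | zero => exact Fin.ext hn ▸ s.refl x
  | succ n ih =>
    let y' : Fin r := ⟨x.val + n, by omega⟩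
    have hy'y : y' < y := Fin.lt_def.2 (by simp [y']; omega)
    exact s.trans (ih ((Ioc_subset_Ioc_right hy'y.le).trans hxy) (Fin.le_def.2 (by simp [y'])) rfl)
      (hs y' y (by simp [y']; omega) (hxy ⟨Fin.lt_def.2 (by omega), le_rfl⟩))

theorem mem_orbit_closure_edgeSwaps {x y : Fin r} (hxy : Ι x y ⊆ I) :
    x ∈ orbit (Subgroup.closure (edgeSwaps I)) y :=
  rel_of_uIoc_subset (orbitRel _ _)
    (fun x y hxy hy => ⟨⟨swap x y, Subgroup.subset_closure ⟨x, y, hxy, hy, rfl⟩⟩, swap_apply_right x y⟩)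
    hxy

theorem mem_closure_edgeSwaps {π : Perm (Fin r)} (hπ : ∀ x, Ι x (π x) ⊆ I) :
    π ∈ Subgroup.closure (edgeSwaps I) := by
  refine (mem_closure_isSwap ?_).2 ⟨toFinite _, fun x => mem_orbit_closure_edgeSwaps ?_⟩
  · rintro _ ⟨x, y, hxy, -, rfl⟩
    exact ⟨x, y, Fin.ne_of_val_ne (by omega), rfl⟩
  · rw [uIoc_comm]
    exact hπ x

theorem uIoc_subset_singleton {x y : Fin r} (hxy : x.val + 1 = y.val) : Ι x y ⊆ {y} := by
  rw [uIoc_of_le (Fin.le_def.2 (by omega))]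
  rintro z ⟨hxz, hzy⟩
  exact Fin.ext (by rw [Fin.lt_def] at hxz; rw [Fin.le_def] at hzy; omega)

variable (r) in
def stringGen (i : Fin r) : Perm (Fin r × Fin 2) :=
  if i.val = 0 then flipAt i
  else blockPerm (Fin 2) (swap ⟨i.val - 1, i.val.sub_le 1 |>.trans_lt i.isLt⟩ i)

theorem stringGen_mem {i : Fin r} (hi : i ∈ I) :
    stringGen r i ∈ blockwise (Fin r) (Fin 2) ⊓ classwiseStabilizer (chainSetoid (Fin 2) I) := by
  unfold stringGen
  split_ifs with h
  · refine ⟨flipAt_mem_blockwise i, flipAt_mem_classwiseStabilizer fun y hy => ?_⟩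
    rwa [Fin.ext (show y.val = i.val from by rw [mem_Iic, Fin.le_def] at hy; omega)]
  · refine ⟨blockPerm_mem_blockwise _, blockPerm_mem_classwiseStabilizer _ fun x => ?_⟩
    exact (uIoc_swap_apply_subset _ _ x).trans
      ((uIoc_subset_singleton (by simp; omega)).trans (singleton_subset_iff.2 hi))

theorem closure_stringGen_le :
    Subgroup.closure (stringGen r '' I) ≤
      blockwise (Fin r) (Fin 2) ⊓ classwiseStabilizer (chainSetoid (Fin 2) I) :=
  (Subgroup.closure_le _).2 (image_subset_iff.2 fun _ => stringGen_mem)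

theorem blockPerm_mem_closure_stringGen {π : Perm (Fin r)}
    (hπ : π ∈ Subgroup.closure (edgeSwaps I)) :
    blockPerm (Fin 2) π ∈ Subgroup.closure (stringGen r '' I) := by
  suffices (Subgroup.closure (edgeSwaps I)).map (blockPerm (Fin 2)) ≤
      Subgroup.closure (stringGen r '' I) from this ⟨π, hπ, rfl⟩
  rw [MonoidHom.map_closure, Subgroup.closure_le]
  rintro _ ⟨_, ⟨x, y, hxy, hy, rfl⟩, rfl⟩
  refine Subgroup.subset_closure ⟨y, hy, ?_⟩
  rw [stringGen, if_neg (by omega)]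
  congr
  omega

theorem flipAt_mem_closure_stringGen {x : Fin r} (hx : Iic x ⊆ I) :
    flipAt x ∈ Subgroup.closure (stringGen r '' I) := by
  let z : Fin r := ⟨0, x.pos⟩
  have hzx : z ≤ x := Fin.le_def.2 (Nat.zero_le _)
  have hz : stringGen r z ∈ Subgroup.closure (stringGen r '' I) :=
    Subgroup.subset_closure ⟨z, hx hzx, rfl⟩
  rw [stringGen, if_pos rfl] at hz
  obtain ⟨⟨π, hπ⟩, hπz⟩ := mem_orbit_closure_edgeSwaps (I := I)
    (((uIoc_of_ge hzx).trans_subset Ioc_subset_Iic_self).trans hx)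
  have hφ := blockPerm_mem_closure_stringGen hπ
  rw [← show π z = x from hπz, ← blockPerm_mul_flipAt_mul_inv]
  exact mul_mem (mul_mem hφ hz) (inv_mem hφ)

theorem closure_stringGen_image (I : Set (Fin r)) :
    Subgroup.closure (stringGen r '' I) =
      blockwise (Fin r) (Fin 2) ⊓ classwiseStabilizer (chainSetoid (Fin 2) I) := by
  refine le_antisymm closure_stringGen_le ?_
  rintro σ ⟨⟨π, hπ⟩, hσ⟩
  have hφ : blockPerm (Fin 2) π ∈ Subgroup.closure (stringGen r '' I) :=
    blockPerm_mem_closure_stringGen (mem_closure_edgeSwaps fun x => hπ (x, 0) ▸ (hσ (x, 0)).1)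
  let τ := (blockPerm (Fin 2) π)⁻¹ * σ
  have hτ : τ ∈ classwiseStabilizer (chainSetoid (Fin 2) I) :=
    mul_mem (inv_mem (closure_stringGen_le hφ).2) hσ
  have hfst (p : Fin r × Fin 2) : (τ p).1 = p.1 := by simp [τ, ← map_inv, hπ]
  have hflips : Subgroup.closure (flipAt '' {x | Iic x ⊆ I}) ≤
      Subgroup.closure (stringGen r '' I) :=
    (Subgroup.closure_le _).2 (image_subset_iff.2 fun _ => flipAt_mem_closure_stringGen)
  simpa [τ] using mul_mem hφ (hflips (mem_closure_flipAt hτ hfst))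

-- For `i = 0` the two hypotheses coincide, since `0 - 1 = 0` in `ℕ`.
theorem stringGen_apply_of_ne {i : Fin r} {p : Fin r × Fin 2} (h₁ : p.1.val ≠ i.val - 1)
    (h₂ : p.1.val ≠ i.val) : stringGen r i p = p := by
  unfold stringGen
  split_ifs
  · rw [flipAt, swap_apply_of_ne_of_ne] <;> rintro rfl <;> exact h₂ rfl
  · rw [blockPerm_apply, swap_apply_of_ne_of_ne] <;> simp [Fin.ext_iff, h₁, h₂]

theorem disjoint_stringGen {i j : Fin r} (h : i.val + 2 ≤ j.val) :
    (stringGen r i).Disjoint (stringGen r j) := by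
  intro p
  by_cases hp : p.1.val + 1 < j.val
  · exact .inr (stringGen_apply_of_ne (by omega) (by omega))
  · exact .inl (stringGen_apply_of_ne (by omega) (by omega))

theorem stringGen_sq (i : Fin r) : stringGen r i ^ 2 = 1 := by
  unfold stringGen
  split_ifs
  · exact (sq _).trans (swap_mul_self _ _)
  · rw [← map_pow, sq, swap_mul_self, map_one]

theorem stringGen_mul_stringGen_sq {i j : Fin r}
    (h : i.val + 2 ≤ j.val ∨ j.val + 2 ≤ i.val) : (stringGen r i * stringGen r j) ^ 2 = 1 := by
  have hc : Commute (stringGen r i) (stringGen r j) :=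
    h.elim (fun h => (disjoint_stringGen h).commute) fun h => (disjoint_stringGen h).commute.symm
  rw [hc.mul_pow, stringGen_sq, stringGen_sq, one_mul]

end Fin

end WreathString

open WreathString

/-- The CPR graph of `C₂ ≀ S_r`: one transposition inside the first block together with the
simultaneous adjacent transpositions of blocks satisfies the string and intersection
properties, and generates the full stabilizer of the block system `{x} × Fin 2`. -/
theorem wreath_C2_Sr_is_string_C_group
    (r : ℕ) (hr : 2 ≤ r) (ρ : Fin r → Equiv.Perm (Fin r × Fin 2))
    (h0 : ∀ i : Fin r, (i : ℕ) = 0 →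
      ρ i = Equiv.swap (⟨0, by omega⟩, 0) (⟨0, by omega⟩, 1))
    (hpos : ∀ i : Fin r, 1 ≤ (i : ℕ) →
      ρ i = Equiv.prodCongr (Equiv.swap ⟨(i : ℕ) - 1, by omega⟩ ⟨(i : ℕ), i.isLt⟩)
        (Equiv.refl (Fin 2))) :
    (∀ i j : Fin r, (i : ℕ) + 2 ≤ (j : ℕ) ∨ (j : ℕ) + 2 ≤ (i : ℕ) →
      (ρ i * ρ j) ^ 2 = 1) ∧
    (∀ I J : Set (Fin r),
      Subgroup.closure (ρ '' I) ⊓ Subgroup.closure (ρ '' J) =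
        Subgroup.closure (ρ '' (I ∩ J))) ∧
    (∀ σ : Equiv.Perm (Fin r × Fin 2), σ ∈ Subgroup.closure (Set.range ρ) ↔
      ∃ π : Equiv.Perm (Fin r), ∀ (x : Fin r) (ε : Fin 2), (σ (x, ε)).1 = π x) := by
  obtain rfl : ρ = stringGen r := funext fun i => by
    unfold stringGen
    split_ifs with hi
    · rw [h0 i hi, flipAt, show i = ⟨0, _⟩ from Fin.ext hi]
    · exact hpos i (by omega)
  refine ⟨fun i j => stringGen_mul_stringGen_sq, fun I J => ?_, fun σ => ?_⟩
  · rw [closure_stringGen_image, closure_stringGen_image, closure_stringGen_image,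
      chainSetoid_inter, classwiseStabilizer_inf]
    exact (inf_inf_distrib_left _ _ _).symm
  · rw [← image_univ, closure_stringGen_image, chainSetoid_univ, classwiseStabilizer_top,
      inf_top_eq, mem_blockwise]
    simp only [Prod.forall]
end

section
/- Let r ≥ 3 and 1 ≤ h ≤ r−2 be integers. On Fin (r+h+1), define involutions ρ₀,…,ρ_{r−1} by: ρ₀ := (h h+1); for 1 ≤ l ≤ h, ρ_l := (h−l, h−l+1)·(h+l, h+l+1); and for h+1 ≤ l ≤ r−1, ρ_l := (h+l, h+l+1); where (p q) denotes the transposition Equiv.swap p q. (This is the permutation representation graph given by a path on r+h+1 vertices whose successive edge labels are h, h−1, …, 1, 0, 1, …, h, h+1, …, r−1.) Then (ρ₀,…,ρ_{r−1}) satisfies the string property and the intersection property, and ⟨ρ₀,…,ρ_{r−1}⟩ = Sym(Fin (r+h+1)) (the full symmetric group on r+h+1 points). -/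
/-!
Let `ρ_l` swap the two ends of every edge labelled `l` of the path. For a set `S` of labels,
`⟨ρ_l : l ∈ S⟩` consists exactly of the permutations that preserve every component of the
subgraph formed by the edges with labels in `S` and commute with the reflection `x ↦ 2h + 1 - x`
on the *mirrored* components: those from which the label `h + 1`, the first one breaking the
symmetry of the path, cannot be reached through labels in `S`. Every `ρ_l` has these properties.
Conversely, such a `g ≠ 1` has a descent `g (j + 1) < g j` along an edge `j` with label in `S`.
If the component of `j` is not mirrored, the transposition `(j j+1)` is generated; otherwise `g`
also has a descent at the mirror image of `j`, and `ρ_l` swaps both edges. Either way, right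
multiplication strictly increases the bounded quantity `∑ x * g x`, so induction finishes.

A component mirrored for `S ∩ T` is mirrored for `S` or for `T`, which gives the intersection
property; with all labels present nothing is mirrored, and the group is the symmetric group.
-/

open Equiv

namespace PathCPR

/-- Edge `j` joins the points `j` and `j + 1`; the labels `h, h - 1, …, 1, 0, 1, …` along the path
are `|j - h|`. -/
def edgeLabel (h j : ℕ) : ℕ := Nat.dist j h

theorem edgeLabel_eq_iff {h j l : ℕ} : edgeLabel h j = l ↔ j + l = h ∨ j = h + l := by
  unfold edgeLabel Nat.dist; omega

theorem edgeLabel_add_self (h l : ℕ) : edgeLabel h (h + l) = l :=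
  edgeLabel_eq_iff.2 (.inr rfl)

def labelSwapFun (n h l x : ℕ) : ℕ :=
  if x + 1 < n ∧ edgeLabel h x = l then x + 1
  else if 0 < x ∧ edgeLabel h (x - 1) = l then x - 1 else x

theorem labelSwapFun_cases (n h l x : ℕ) :
    (x + 1 < n ∧ (x + l = h ∨ x = h + l) ∧ labelSwapFun n h l x = x + 1) ∨
    (0 < x ∧ (x + l = h + 1 ∨ x = h + l + 1) ∧ labelSwapFun n h l x = x - 1) ∨
    (¬(x + 1 < n ∧ (x + l = h ∨ x = h + l)) ∧ ¬(0 < x ∧ (x + l = h + 1 ∨ x = h + l + 1)) ∧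
      labelSwapFun n h l x = x) := by
  unfold labelSwapFun edgeLabel Nat.dist
  split_ifs <;> omega

theorem labelSwapFun_lt {n h l x : ℕ} (hx : x < n) : labelSwapFun n h l x < n := by
  have := labelSwapFun_cases n h l x
  omega

theorem labelSwapFun_labelSwapFun {n h l x : ℕ} (hx : x < n) :
    labelSwapFun n h l (labelSwapFun n h l x) = x := by
  have := labelSwapFun_cases n h l x
  have := labelSwapFun_cases n h l (labelSwapFun n h l x)
  omega

theorem labelSwapFun_comm {n h i j x : ℕ} (hij : i + 2 ≤ j ∨ j + 2 ≤ i) :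
    labelSwapFun n h i (labelSwapFun n h j x) = labelSwapFun n h j (labelSwapFun n h i x) := by
  have hix := labelSwapFun_cases n h i x
  rcases labelSwapFun_cases n h j x with hj | hj | hj
  · have hi' := labelSwapFun_cases n h i (x + 1)
    rw [hj.2.2, show labelSwapFun n h i x = x by omega, hj.2.2]
    omega
  · have hi' := labelSwapFun_cases n h i (x - 1)
    rw [hj.2.2, show labelSwapFun n h i x = x by omega, hj.2.2]
    omega
  · have hj' := labelSwapFun_cases n h j (labelSwapFun n h i x)
    rw [hj.2.2]
    omega

/-- The generator `ρ_l`. Edges with equal labels are never adjacent, since the labels of adjacent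
edges differ by one. -/
def labelSwap (h n l : ℕ) : Perm (Fin n) :=
  Function.Involutive.toPerm (fun x => ⟨labelSwapFun n h l x, labelSwapFun_lt x.isLt⟩)
    fun x => Fin.ext (labelSwapFun_labelSwapFun x.isLt)

@[simp]
theorem val_labelSwap {h n l : ℕ} (x : Fin n) : (labelSwap h n l x : ℕ) = labelSwapFun n h l x :=
  rfl

theorem labelSwap_mul_self (h n l : ℕ) : labelSwap h n l * labelSwap h n l = 1 :=
  Perm.ext fun x => Fin.ext (labelSwapFun_labelSwapFun x.isLt)

theorem commute_labelSwap {h n i j : ℕ} (hij : i + 2 ≤ j ∨ j + 2 ≤ i) :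
    Commute (labelSwap h n i) (labelSwap h n j) :=
  Perm.ext fun _ => Fin.ext (labelSwapFun_comm hij)

theorem labelSwap_mul_labelSwap_sq {h n i j : ℕ} (hij : i + 2 ≤ j ∨ j + 2 ≤ i) :
    (labelSwap h n i * labelSwap h n j) ^ 2 = 1 := by
  rw [(commute_labelSwap hij).mul_pow, sq, sq, labelSwap_mul_self, labelSwap_mul_self, one_mul]

theorem val_swap_cases {n : ℕ} (a b x : Fin n) :
    ((x : ℕ) = a ∧ (swap a b x : ℕ) = b) ∨ ((x : ℕ) ≠ a ∧ (x : ℕ) = b ∧ (swap a b x : ℕ) = a) ∨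
      ((x : ℕ) ≠ a ∧ (x : ℕ) ≠ b ∧ (swap a b x : ℕ) = x) := by
  rw [swap_apply_def]
  split_ifs <;> simp_all [Fin.val_ne_iff]

theorem labelSwap_eq_swap {h n l j : ℕ} (hl : l = 0 ∨ h < l) (hj : edgeLabel h j = l)
    (hjn : j + 1 < n) : labelSwap h n l = swap ⟨j, by omega⟩ ⟨j + 1, hjn⟩ := by
  refine Perm.ext fun x => Fin.ext ?_
  unfold edgeLabel Nat.dist at hj
  have := labelSwapFun_cases n h l x
  have := val_swap_cases ⟨j, by omega⟩ ⟨j + 1, hjn⟩ x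
  simp only [val_labelSwap] at *
  omega

theorem labelSwap_eq_swap_mul_swap {h n l : ℕ} (hl : 1 ≤ l) (hlh : l ≤ h) (hn : h + l + 1 < n) :
    labelSwap h n l =
      swap ⟨h - l, by omega⟩ ⟨h - l + 1, by omega⟩ * swap ⟨h + l, by omega⟩ ⟨h + l + 1, hn⟩ := by
  refine Perm.ext fun x => Fin.ext ?_
  have := labelSwapFun_cases n h l x
  have := val_swap_cases ⟨h + l, by omega⟩ ⟨h + l + 1, hn⟩ x
  have := val_swap_cases ⟨h - l, by omega⟩ ⟨h - l + 1, by omega⟩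
    (swap ⟨h + l, by omega⟩ ⟨h + l + 1, hn⟩ x)
  simp only [val_labelSwap, Perm.mul_apply] at *
  omega

def Joined (h : ℕ) (S : Set ℕ) (x y : ℕ) : Prop :=
  ∀ j, min x y ≤ j → j < max x y → edgeLabel h j ∈ S

namespace Joined

variable {h : ℕ} {S T : Set ℕ} {x y z : ℕ}

theorem refl (h : ℕ) (S : Set ℕ) (x : ℕ) : Joined h S x x :=
  fun _ h₁ h₂ => by omega

theorem symm (hxy : Joined h S x y) : Joined h S y x :=
  fun j h₁ h₂ => hxy j (by omega) (by omega)

theorem trans (hxy : Joined h S x y) (hyz : Joined h S y z) : Joined h S x z := fun j h₁ h₂ =>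
  if hj : min x y ≤ j ∧ j < max x y then hxy j hj.1 hj.2 else hyz j (by omega) (by omega)

theorem mono (hxy : Joined h S x y) (hST : S ⊆ T) : Joined h T x y :=
  fun j h₁ h₂ => hST (hxy j h₁ h₂)

theorem inter (hS : Joined h S x y) (hT : Joined h T x y) : Joined h (S ∩ T) x y :=
  fun j h₁ h₂ => ⟨hS j h₁ h₂, hT j h₁ h₂⟩

theorem succ (hx : edgeLabel h x ∈ S) : Joined h S x (x + 1) :=
  fun j h₁ h₂ => by rwa [show j = x by omega]

end Joined

theorem exists_edgeLabel_eq {h i j m : ℕ} (hi : edgeLabel h i ≤ m) (hj : m ≤ edgeLabel h j) :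
    ∃ e, min i j ≤ e ∧ e ≤ max i j ∧ edgeLabel h e = m := by
  unfold edgeLabel Nat.dist at *
  by_cases hc : min i j ≤ h - m ∧ h - m ≤ max i j ∧ m ≤ h
  · exact ⟨h - m, hc.1, hc.2.1, by omega⟩
  · exact ⟨h + m, by omega, by omega, by omega⟩

theorem Joined.mem_of_edgeLabel_le_of_le {h : ℕ} {S : Set ℕ} {x y i j m : ℕ}
    (hxy : Joined h S x y) (hi : min x y ≤ i ∧ i < max x y) (hj : min x y ≤ j ∧ j < max x y)
    (him : edgeLabel h i ≤ m) (hmj : m ≤ edgeLabel h j) : m ∈ S := by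
  obtain ⟨e, he₁, he₂, rfl⟩ := exists_edgeLabel_eq him hmj
  exact hxy e (by omega) (by omega)

/-- The component of `x` contains an edge whose label is separated from `h + 1` by a missing
label. Such a component lies in the symmetric part `[0, 2h + 1]` of the path, and the group
generated by the labels in `S` moves it in step with its mirror image. -/
def Mirrored (h : ℕ) (S : Set ℕ) (x : ℕ) : Prop :=
  ∃ m ∉ S, m ≤ h + 1 ∧ ∃ j, Joined h S x j ∧ edgeLabel h j ∈ S ∧ edgeLabel h j < m

namespace Mirrored

variable {h : ℕ} {S T : Set ℕ} {x y : ℕ}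

theorem of_joined (hx : Mirrored h S x) (hxy : Joined h S x y) : Mirrored h S y :=
  let ⟨m, hm, hmh, j, hj, hjS, hjm⟩ := hx
  ⟨m, hm, hmh, j, hxy.symm.trans hj, hjS, hjm⟩

theorem of_inter (hx : Mirrored h (S ∩ T) x) : Mirrored h S x ∨ Mirrored h T x := by
  obtain ⟨m, hm, hmh, j, hj, hjS, hjm⟩ := hx
  by_cases hmS : m ∈ S
  · exact .inr ⟨m, fun hmT => hm ⟨hmS, hmT⟩, hmh, j, hj.mono Set.inter_subset_right, hjS.2, hjm⟩
  · exact .inl ⟨m, hmS, hmh, j, hj.mono Set.inter_subset_left, hjS.1, hjm⟩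

theorem pos_and_le (hx : Mirrored h S x) (hS : h + 1 ∈ S) : 0 < x ∧ x ≤ 2 * h := by
  obtain ⟨m, hm, hmh, j, hj, hjS, hjm⟩ := hx
  have hmh' : m ≤ h := Nat.le_of_lt_succ (lt_of_le_of_ne hmh (by rintro rfl; exact hm hS))
  have hlab₀ : edgeLabel h 0 = h := edgeLabel_eq_iff.2 (.inl (zero_add h))
  have hlab₂ : edgeLabel h (2 * h) = h := edgeLabel_eq_iff.2 (.inr (two_mul h))
  constructor
  · by_contra hx0
    exact hm ((hj.trans (Joined.succ hjS)).mem_of_edgeLabel_le_of_le (i := j) (j := 0)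
      (by omega) (by omega) hjm.le (hmh'.trans_eq hlab₀.symm))
  · by_contra hx2
    have hj2 : j < 2 * h := by unfold edgeLabel Nat.dist at hjm; omega
    exact hm (hj.mem_of_edgeLabel_le_of_le (i := j) (j := 2 * h) (by omega) (by omega) hjm.le
      (hmh'.trans_eq hlab₂.symm))

end Mirrored

/-- Commuting with the reflection `x ↦ 2h + 1 - x` is encoded as preserving the pairing
`x + y = 2h + 1`, which needs no reflection map on `Fin n`. -/
def pathSubgroup (h n : ℕ) (S : Set ℕ) : Subgroup (Perm (Fin n)) where
  carrier := {g | (∀ x : Fin n, Joined h S x (g x)) ∧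
    ∀ x y : Fin n, Mirrored h S x → ((x : ℕ) + y = 2 * h + 1 ↔ (g x : ℕ) + g y = 2 * h + 1)}
  one_mem' := ⟨fun x => Joined.refl h S x, fun _ _ _ => Iff.rfl⟩
  mul_mem' := by
    rintro a b ⟨ha, ha'⟩ ⟨hb, hb'⟩
    exact ⟨fun x => (hb x).trans (ha (b x)),
      fun x y hx => (hb' x y hx).trans (ha' (b x) (b y) (hx.of_joined (hb x)))⟩
  inv_mem' := by
    rintro g ⟨hg, hg'⟩
    have hinv : ∀ x : Fin n, Joined h S x (g⁻¹ x) := fun x => by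
      simpa using (hg (g⁻¹ x)).symm
    refine ⟨hinv, fun x y hx => ?_⟩
    simpa using (hg' (g⁻¹ x) (g⁻¹ y) (hx.of_joined (hinv x))).symm

section Generators

variable {h n l : ℕ} {S T : Set ℕ}

theorem joined_labelSwap (hl : l ∈ S) (x : Fin n) : Joined h S x (labelSwap h n l x) := by
  rw [val_labelSwap]
  rcases labelSwapFun_cases n h l x with ⟨-, hx, he⟩ | ⟨hx0, hx, he⟩ | ⟨-, -, he⟩ <;> rw [he]
  · exact Joined.succ (edgeLabel_eq_iff.2 hx ▸ hl)
  · have hlab : edgeLabel h (x - 1) = l := edgeLabel_eq_iff.2 (by omega)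
    have := (Joined.succ (S := S) (hlab ▸ hl)).symm
    rwa [Nat.sub_add_cancel hx0] at this
  · exact Joined.refl h S x

theorem labelSwap_mem_pathSubgroup (hn : 2 * h + 1 < n) (hl : l ∈ S) :
    labelSwap h n l ∈ pathSubgroup h n S := by
  refine ⟨joined_labelSwap hl, fun x y hx => ?_⟩
  have hx' := labelSwapFun_cases n h l x
  have hy' := labelSwapFun_cases n h l y
  have := x.isLt
  have := y.isLt
  simp only [val_labelSwap]
  rcases le_or_gt l h with hlh | hlh
  · omega
  · have := fun e : l = h + 1 => hx.pos_and_le (e ▸ hl)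
    omega

theorem closure_labelSwap_le_pathSubgroup (hn : 2 * h + 1 < n) :
    Subgroup.closure (labelSwap h n '' S) ≤ pathSubgroup h n S :=
  (Subgroup.closure_le _).2 <| by
    rintro _ ⟨l, hl, rfl⟩
    exact labelSwap_mem_pathSubgroup hn hl

theorem pathSubgroup_inf_le :
    pathSubgroup h n S ⊓ pathSubgroup h n T ≤ pathSubgroup h n (S ∩ T) := by
  rintro g ⟨⟨hS, hS'⟩, hT, hT'⟩
  exact ⟨fun x => (hS x).inter (hT x), fun x y hx => hx.of_inter.elim (hS' x y) (hT' x y)⟩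

theorem pathSubgroup_eq_top (hE : ∀ j, j + 1 < n → edgeLabel h j ∈ S)
    (hS : ∀ m ≤ h + 1, m ∈ S) : pathSubgroup h n S = ⊤ := by
  refine eq_top_iff.2 fun g _ => ⟨fun x j h₁ h₂ => hE j ?_, fun _ _ ⟨m, hm, hmh, _⟩ => ?_⟩
  · have := x.isLt
    have := (g x).isLt
    omega
  · exact absurd (hS m hmh) hm

end Generators

section Weight

variable {n : ℕ}

def weight (g : Perm (Fin n)) : ℕ := ∑ x : Fin n, (x : ℕ) * g x

theorem weight_le_weight_one (g : Perm (Fin n)) : weight g ≤ weight (1 : Perm (Fin n)) :=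
  (monovary_self fun x : Fin n => (x : ℕ)).sum_mul_comp_perm_le_sum_mul

theorem weight_mul_swap (g : Perm (Fin n)) (a b : Fin n) :
    (weight (g * swap a b) : ℤ) = weight g + ((b : ℤ) - a) * ((g a : ℤ) - g b) := by
  rcases eq_or_ne a b with rfl | hab
  · simp [← Perm.one_def]
  unfold weight
  push_cast
  rw [← sub_eq_iff_eq_add', ← Finset.sum_sub_distrib,
    Finset.sum_eq_add a b hab (fun c _ hc => by simp [swap_apply_of_ne_of_ne hc.1 hc.2])
      (by simp) (by simp)]
  simp only [Function.comp_apply, swap_apply_left, swap_apply_right]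
  ring

theorem weight_mul_swap_of_succ (g : Perm (Fin n)) {a b : Fin n} (hab : (b : ℕ) = a + 1) :
    (weight (g * swap a b) : ℤ) = weight g + g a - g b := by
  rw [weight_mul_swap, hab]
  push_cast
  ring

theorem le_of_forall_exists_weight_lt {H K : Subgroup (Perm (Fin n))} (hHK : H ≤ K)
    (hK : ∀ g ∈ K, g ≠ 1 → ∃ s ∈ H, weight g < weight (g * s)) : K ≤ H := by
  intro g hg
  induction hk : weight 1 - weight g using Nat.strong_induction_on generalizing g with
  | _ k ih =>
    by_cases hg1 : g = 1
    · exact hg1 ▸ H.one_mem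
    obtain ⟨s, hs, hlt⟩ := hK g hg hg1
    have := weight_le_weight_one (g * s)
    have hgs : g * s ∈ H := ih _ (by omega) (K.mul_mem hg (hHK hs)) rfl
    simpa using H.mul_mem hgs (H.inv_mem hs)

theorem eq_one_of_forall_le (g : Perm (Fin n)) (hg : ∀ x : Fin n, (x : ℕ) ≤ g x) : g = 1 := by
  have hsum : ∑ x : Fin n, (g x : ℕ) = ∑ x : Fin n, (x : ℕ) := Equiv.sum_comp g _
  have := (Finset.sum_eq_sum_iff_of_le fun x _ => hg x).1 hsum.symm
  exact Perm.ext fun x => Fin.ext (this x (Finset.mem_univ x)).symm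

theorem exists_descent {h : ℕ} {S : Set ℕ} {g : Perm (Fin n)}
    (hg : ∀ x : Fin n, Joined h S x (g x)) (hg1 : g ≠ 1) :
    ∃ j, ∃ hj : j + 1 < n, edgeLabel h j ∈ S ∧ (g ⟨j + 1, hj⟩ : ℕ) < g ⟨j, by omega⟩ := by
  by_contra! hc
  refine hg1 (eq_one_of_forall_le g fun x : Fin n => ?_)
  obtain ⟨m, hm⟩ : ∃ m, (x : ℕ) = m := ⟨_, rfl⟩
  induction m generalizing x with
  | zero => omega
  | succ m ih =>
    by_contra! hlt
    have hmS : edgeLabel h m ∈ S := hg x m (by omega) (by omega)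
    have hy : m ≤ g ⟨m, by omega⟩ := ih ⟨m, by omega⟩ rfl
    have hmono := hc m (by omega) hmS
    rw [show (⟨m + 1, _⟩ : Fin n) = x from Fin.ext hm.symm] at hmono
    have : m = (x : ℕ) := congrArg Fin.val (g.injective (Fin.ext (by omega) : g ⟨m, _⟩ = g x))
    omega

end Weight

theorem swap_mem_of_swap_mem {α : Type*} [DecidableEq α] {G : Subgroup (Perm α)} {σ : Perm α}
    {a b c : α} (hσ : σ ∈ G) (hbc : swap b c ∈ G) (hb : σ b = a) (hc : σ c = c) (hba : b ≠ a)
    (hbc' : b ≠ c) : swap a b ∈ G := by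
  have hca : swap c a ∈ G := by
    rw [← hb, ← hc, swap_apply_apply, swap_comm]
    exact G.mul_mem (G.mul_mem hσ hbc) (G.inv_mem hσ)
  rw [← swap_mul_swap_mul_swap hbc' hba]
  exact G.mul_mem (G.mul_mem hca hbc) hca

section Closure

open Subgroup

variable {h n : ℕ} {S T : Set ℕ}

/-- Conjugating by `ρ_l` moves a transposition one edge towards the centre, starting from
`ρ_{h+1} = (2h+1 2h+2)`. -/
theorem swap_mem_closure_of_forall_mem (hn : 2 * h + 2 < n) {l : ℕ} (hl : l ≤ h + 1)
    (hrun : ∀ m, l ≤ m → m ≤ h + 1 → m ∈ S) :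
    swap (⟨h + l, by omega⟩ : Fin n) ⟨h + l + 1, by omega⟩ ∈ closure (labelSwap h n '' S) := by
  have hσ : labelSwap h n l ∈ closure (labelSwap h n '' S) :=
    subset_closure ⟨l, hrun l le_rfl hl, rfl⟩
  induction hd : h + 1 - l generalizing l with
  | zero =>
    rwa [labelSwap_eq_swap (.inr (by omega)) (edgeLabel_add_self h l) (by omega)] at hσ
  | succ d ih =>
    have hnext := ih (l := l + 1) (by omega) (fun m h₁ h₂ => hrun m (by omega) h₂)
      (subset_closure ⟨l + 1, hrun _ (by omega) (by omega), rfl⟩) (by omega)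
    have hb := labelSwapFun_cases n h l (h + l + 1)
    have hc := labelSwapFun_cases n h l (h + l + 2)
    refine swap_mem_of_swap_mem (c := ⟨h + l + 2, by omega⟩) hσ hnext ?_ ?_
      (by simp [Fin.ext_iff]) (by simp [Fin.ext_iff]) <;>
    · refine Fin.ext ?_
      simp only [val_labelSwap]
      omega

theorem swap_mem_closure (hn : 2 * h + 2 < n) {j : ℕ} (hj : j + 1 < n) (hjS : edgeLabel h j ∈ S)
    (hfree : edgeLabel h j = 0 ∨ h < edgeLabel h j ∨
      ∀ m, edgeLabel h j ≤ m → m ≤ h + 1 → m ∈ S) :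
    swap (⟨j, by omega⟩ : Fin n) ⟨j + 1, hj⟩ ∈ closure (labelSwap h n '' S) := by
  have hσ : labelSwap h n (edgeLabel h j) ∈ closure (labelSwap h n '' S) :=
    subset_closure ⟨_, hjS, rfl⟩
  by_cases hsingle : edgeLabel h j = 0 ∨ h < edgeLabel h j
  · rwa [labelSwap_eq_swap hsingle rfl hj] at hσ
  have hrun := (or_assoc.2 hfree).resolve_left hsingle
  obtain ⟨L, hL⟩ : ∃ L, edgeLabel h j = L := ⟨_, rfl⟩
  rw [hL] at hσ hrun hsingle
  have hright := swap_mem_closure_of_forall_mem hn (l := L) (by omega) hrun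
  rcases edgeLabel_eq_iff.1 hL with hjL | rfl
  · rw [labelSwap_eq_swap_mul_swap (by omega) (by omega) (by omega)] at hσ
    have := mul_mem hσ (inv_mem hright)
    rw [mul_inv_cancel_right] at this
    convert this using 2 <;> simp only [Fin.mk.injEq] <;> omega
  · exact hright

theorem weight_lt_weight_mul_labelSwap (hn : 2 * h + 1 < n) {g : Perm (Fin n)}
    (hg : g ∈ pathSubgroup h n S) {j m : ℕ} (hj : j + 1 < n) (hjS : edgeLabel h j ∈ S)
    (hj0 : edgeLabel h j ≠ 0) (hm : m ∉ S) (hjm : edgeLabel h j ≤ m) (hmh : m ≤ h + 1)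
    (hdesc : (g ⟨j + 1, hj⟩ : ℕ) < g ⟨j, by omega⟩) :
    weight g < weight (g * labelSwap h n (edgeLabel h j)) := by
  obtain ⟨L, hL⟩ : ∃ L, edgeLabel h j = L := ⟨_, rfl⟩
  rw [hL] at hjS hj0 hjm ⊢
  have hLm : L < m := lt_of_le_of_ne hjm (by rintro rfl; exact hm hjS)
  have hLS : edgeLabel h (h + L) ∈ S := (edgeLabel_add_self h L).symm ▸ hjS
  have hmir : Mirrored h S (h + L) :=
    ⟨m, hm, hmh, h + L, Joined.refl h S _, hLS, (edgeLabel_add_self h L).symm ▸ hLm⟩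
  have hmir' := hmir.of_joined (Joined.succ hLS)
  have hdesc' : (g ⟨h + L + 1, by omega⟩ : ℕ) < g ⟨h + L, by omega⟩ ∨
      (g ⟨h - L + 1, by omega⟩ : ℕ) < g ⟨h - L, by omega⟩ := by
    rcases edgeLabel_eq_iff.1 hL with hjL | rfl
    · obtain rfl : j = h - L := by omega
      exact .inr hdesc
    · exact .inl hdesc
  rw [labelSwap_eq_swap_mul_swap (by omega) (by omega) (by omega), ← mul_assoc]
  set a : Fin n := ⟨h - L, by omega⟩
  set a' : Fin n := ⟨h - L + 1, by omega⟩
  set c : Fin n := ⟨h + L, by omega⟩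
  set c' : Fin n := ⟨h + L + 1, by omega⟩
  -- `g` commutes with the reflection, so its descents at the edges `a` and `c` have equal size
  have hpair : (g c : ℕ) + g a' = 2 * h + 1 := (hg.2 c a' hmir).1 (by simp [c, a']; omega)
  have hpair' : (g c' : ℕ) + g a = 2 * h + 1 := (hg.2 c' a hmir').1 (by simp [c', a]; omega)
  have hfix : ∀ x : Fin n, (x : ℕ) = h + L ∨ (x : ℕ) = h + L + 1 → swap a a' x = x :=
    fun x hx => swap_apply_of_ne_of_ne (Fin.ne_of_val_ne (by simp [a]; omega))
      (Fin.ne_of_val_ne (by simp [a']; omega))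
  have e₁ := weight_mul_swap_of_succ g (a := a) (b := a') rfl
  have e₂ := weight_mul_swap_of_succ (g * swap a a') (a := c) (b := c') rfl
  rw [Perm.mul_apply, Perm.mul_apply, hfix c (.inl rfl), hfix c' (.inr rfl)] at e₂
  omega

theorem exists_mem_closure_weight_lt (hn : 2 * h + 2 < n) {g : Perm (Fin n)}
    (hg : g ∈ pathSubgroup h n S) (hg1 : g ≠ 1) :
    ∃ s ∈ closure (labelSwap h n '' S), weight g < weight (g * s) := by
  obtain ⟨j, hj, hjS, hdesc⟩ := exists_descent hg.1 hg1
  by_cases hfree : edgeLabel h j = 0 ∨ h < edgeLabel h j ∨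
      ∀ m, edgeLabel h j ≤ m → m ≤ h + 1 → m ∈ S
  · refine ⟨_, swap_mem_closure hn hj hjS hfree, ?_⟩
    have := weight_mul_swap_of_succ g (a := ⟨j, by omega⟩) (b := ⟨j + 1, hj⟩) rfl
    omega
  · push Not at hfree
    obtain ⟨hj0, -, m, hjm, hmh, hm⟩ := hfree
    exact ⟨_, subset_closure ⟨_, hjS, rfl⟩,
      weight_lt_weight_mul_labelSwap (by omega) hg hj hjS hj0 hm hjm hmh hdesc⟩

theorem closure_labelSwap_eq_pathSubgroup (hn : 2 * h + 2 < n) :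
    closure (labelSwap h n '' S) = pathSubgroup h n S :=
  le_antisymm (closure_labelSwap_le_pathSubgroup (by omega)) <|
    le_of_forall_exists_weight_lt (closure_labelSwap_le_pathSubgroup (by omega))
      fun _ hg hg1 => exists_mem_closure_weight_lt hn hg hg1

theorem closure_labelSwap_inf (hn : 2 * h + 2 < n) :
    closure (labelSwap h n '' S) ⊓ closure (labelSwap h n '' T) =
      closure (labelSwap h n '' (S ∩ T)) := by
  refine le_antisymm ?_ (le_inf (closure_mono (Set.image_mono Set.inter_subset_left))
    (closure_mono (Set.image_mono Set.inter_subset_right)))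
  simp only [closure_labelSwap_eq_pathSubgroup hn]
  exact pathSubgroup_inf_le

end Closure

end PathCPR

open PathCPR

/-- Proposition "counterexample1": the path CPR graph with successive edge labels
`h, h-1, …, 1, 0, 1, …, h, h+1, …, r-1` is a CPR graph for `S_{r+h+1}`. -/
theorem path_graph_is_CPR_for_Srh1
    (r h : ℕ) (hr : 3 ≤ r) (h2 : h ≤ r - 2)
    (ρ : Fin r → Equiv.Perm (Fin (r + h + 1)))
    (hzero : ∀ l : Fin r, (l : ℕ) = 0 →
      ρ l = Equiv.swap ⟨h, by omega⟩ ⟨h + 1, by omega⟩)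
    (hmid : ∀ l : Fin r, ∀ hl : 1 ≤ (l : ℕ) ∧ (l : ℕ) ≤ h,
      ρ l = Equiv.swap ⟨h - (l : ℕ), by omega⟩ ⟨h - (l : ℕ) + 1, by omega⟩ *
        Equiv.swap ⟨h + (l : ℕ), by omega⟩ ⟨h + (l : ℕ) + 1, by omega⟩)
    (hhigh : ∀ l : Fin r, ∀ hl : h + 1 ≤ (l : ℕ),
      ρ l = Equiv.swap ⟨h + (l : ℕ), by omega⟩ ⟨h + (l : ℕ) + 1, by omega⟩) :
    (∀ i j : Fin r, (i : ℕ) + 2 ≤ (j : ℕ) ∨ (j : ℕ) + 2 ≤ (i : ℕ) →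
      (ρ i * ρ j) ^ 2 = 1) ∧
    (∀ I J : Set (Fin r),
      Subgroup.closure (ρ '' I) ⊓ Subgroup.closure (ρ '' J) =
        Subgroup.closure (ρ '' (I ∩ J))) ∧
    Subgroup.closure (Set.range ρ) = (⊤ : Subgroup (Equiv.Perm (Fin (r + h + 1)))) := by
  have hn : 2 * h + 2 < r + h + 1 := by omega
  have hρ : ∀ l, ρ l = labelSwap h (r + h + 1) l := fun l => by
    rcases (by omega : (l : ℕ) = 0 ∨ 1 ≤ (l : ℕ) ∧ (l : ℕ) ≤ h ∨ h + 1 ≤ (l : ℕ)) with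
      hl | hl | hl
    · rw [hzero l hl, labelSwap_eq_swap (j := h) (.inl hl) (edgeLabel_eq_iff.2 (by omega))]
    · rw [hmid l hl, labelSwap_eq_swap_mul_swap hl.1 hl.2]
    · rw [hhigh l hl, labelSwap_eq_swap (.inr hl) (edgeLabel_add_self h l)]
  have himage : ∀ I : Set (Fin r), ρ '' I = labelSwap h (r + h + 1) '' (Fin.val '' I) :=
    fun I => by rw [Set.image_image]; simp only [hρ]
  refine ⟨fun i j hij => ?_, fun I J => ?_, ?_⟩
  · rw [hρ, hρ]
    exact labelSwap_mul_labelSwap_sq hij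
  · rw [himage, himage, himage, Set.image_inter Fin.val_injective]
    exact closure_labelSwap_inf hn
  · rw [← Set.image_univ, himage, closure_labelSwap_eq_pathSubgroup hn]
    refine pathSubgroup_eq_top (fun j hj => ⟨⟨edgeLabel h j, ?_⟩, trivial, rfl⟩)
      fun m hm => ⟨⟨m, by omega⟩, trivial, rfl⟩
    unfold edgeLabel Nat.dist
    omega
end
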